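/- arXiv:2401.01879 — 12 statements merged into one kernel-verified Lean document; each statement's English description precedes it below -/
import Mathlib

section
/- For the binary best-of-n example, KL(π⁽ⁿ⁾ ‖ p) = log 2 − h(1/2ⁿ) is bounded above by log 2 for every n ≥ 1, and converges to log 2 as n → ∞, while log(n) − (n−1)/n tends to infinity; hence the gap log(n) − (n−1)/n − KL(π⁽ⁿ⁾ ‖ p) is unbounded in n. -/
open Real Filter

lemma aux_x : Tendsto (fun n : ℕ => (1 : ℝ) / 2 ^ n) atTop (nhds 0) := by
  simpa [one_div] using tendsto_pow_atTop_nhds_zero_of_lt_one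
    (by norm_num : (0:ℝ) ≤ 2⁻¹) (by norm_num : (2:ℝ)⁻¹ < 1) |>.congr (by
      intro n; simp [inv_pow])

lemma aux_h : Tendsto (fun n : ℕ =>
    (-(1 / 2 ^ n) * Real.log (1 / 2 ^ n)
          - (1 - 1 / 2 ^ n) * Real.log (1 - 1 / 2 ^ n))) atTop (nhds 0) := by
  have hx := aux_x
  have h1 : Tendsto (fun n : ℕ => Real.negMulLog (1 / 2 ^ n)) atTop (nhds 0) := by
    have := (Real.continuous_negMulLog.tendsto 0).comp hx
    simpa only [Function.comp_def, Real.negMulLog_zero] using this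
  have h2 : Tendsto (fun n : ℕ => Real.negMulLog (1 - 1 / 2 ^ n)) atTop (nhds 0) := by
    have hx1 : Tendsto (fun n : ℕ => 1 - (1 : ℝ) / 2 ^ n) atTop (nhds 1) := by
      simpa using (tendsto_const_nhds (x := (1:ℝ)) (f := atTop)).sub hx
    have := (Real.continuous_negMulLog.tendsto 1).comp hx1
    simpa only [Function.comp_def, Real.negMulLog_one] using this
  have h := h1.add h2
  rw [add_zero] at h
  refine h.congr fun n => ?_
  unfold Real.negMulLog
  ring

lemma aux_kl : Tendsto (fun n : ℕ =>
        Real.log 2 - (-(1 / 2 ^ n) * Real.log (1 / 2 ^ n)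
          - (1 - 1 / 2 ^ n) * Real.log (1 - 1 / 2 ^ n)))
      atTop (nhds (Real.log 2)) := by
  simpa using (tendsto_const_nhds (x := Real.log 2) (f := atTop)).sub aux_h

lemma aux_log : Tendsto (fun n : ℕ => Real.log n - ((n : ℝ) - 1) / n) atTop atTop := by
  have h : Tendsto (fun n : ℕ => Real.log n - 1) atTop atTop :=
    (Real.tendsto_log_atTop.comp tendsto_natCast_atTop_atTop).atTop_add tendsto_const_nhds
  refine tendsto_atTop_mono ?_ h
  intro n
  rcases Nat.eq_zero_or_pos n with h0 | h0
  · simp [h0]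
  · have hn : (0:ℝ) < n := by exact_mod_cast h0
    have : ((n : ℝ) - 1) / n ≤ 1 := by
      rw [div_le_one hn]; linarith
    linarith

theorem stmt_1 :
    (∀ n : ℕ, 1 ≤ n →
        Real.log 2 - (-(1 / 2 ^ n) * Real.log (1 / 2 ^ n)
          - (1 - 1 / 2 ^ n) * Real.log (1 - 1 / 2 ^ n)) ≤ Real.log 2) ∧
    Tendsto (fun n : ℕ =>
        Real.log 2 - (-(1 / 2 ^ n) * Real.log (1 / 2 ^ n)
          - (1 - 1 / 2 ^ n) * Real.log (1 - 1 / 2 ^ n)))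
      atTop (nhds (Real.log 2)) ∧
    Tendsto (fun n : ℕ => Real.log n - ((n : ℝ) - 1) / n) atTop atTop ∧
    Tendsto (fun n : ℕ =>
        (Real.log n - ((n : ℝ) - 1) / n) -
        (Real.log 2 - (-(1 / 2 ^ n) * Real.log (1 / 2 ^ n)
          - (1 - 1 / 2 ^ n) * Real.log (1 - 1 / 2 ^ n))))
      atTop atTop := by
  refine ⟨?_, aux_kl, aux_log, ?_⟩
  · intro n hn
    have hx0 : (0:ℝ) < 1 / 2 ^ n := by positivity
    have hx1 : (1:ℝ) / 2 ^ n ≤ 1 := by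
      rw [div_le_one (by positivity)]
      exact one_le_pow₀ (by norm_num : (1:ℝ) ≤ 2)
    have hl1 : Real.log (1 / 2 ^ n) ≤ 0 := Real.log_nonpos (le_of_lt hx0) hx1
    have hl2 : Real.log (1 - 1 / 2 ^ n) ≤ 0 :=
      Real.log_nonpos (by linarith) (by linarith)
    nlinarith [mul_nonneg (le_of_lt hx0) (neg_nonneg.mpr hl1),
      mul_nonneg (by linarith : (0:ℝ) ≤ 1 - 1 / 2 ^ n) (neg_nonneg.mpr hl2)]
  · exact (aux_log.atTop_add aux_kl.neg).congr fun n => (sub_eq_add_neg _ _).symm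
end

section
/- The function π⁽ⁿ⁾(y) = F(y)ⁿ − F⁻(y)ⁿ, where F and F⁻ are the CDF and strict CDF of the reward under p on a finite set with injective rewards, is a probability mass function: it is nonnegative and its values sum to 1 over Y. -/
/-!
Order `Y` by reward. Then `F⁻(y)` is `F` of the predecessor of `y`, so the sum of `F(y)ⁿ − F⁻(y)ⁿ`
telescopes to `F(y_max)ⁿ = 1ⁿ = 1`; nonnegativity is monotonicity of `x ↦ xⁿ` on `[0, ∞)`.
The telescoping is proved by induction on a finset, adding a new element of maximal reward.
-/

open Finset Real

namespace Finset

variable {Y α M G : Type*} [LinearOrder α] [AddCommMonoid M] [AddCommGroup G]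

theorem sum_sub_filter_le_filter_lt_eq [DecidableEq Y] (s : Finset Y) (r : Y → α)
    (hr : Function.Injective r) (p : Y → M) (f : M → G) (hf : f 0 = 0) :
    ∑ y ∈ s, (f (∑ z ∈ s with r z ≤ r y, p z) - f (∑ z ∈ s with r z < r y, p z)) =
      f (∑ z ∈ s, p z) := by
  induction s using induction_on_max_value r with
  | empty => simp [hf]
  | insert m s hms hmax ih =>
    have hlt : ∀ y ∈ s, r y < r m := fun y hy ↦
      (hmax y hy).lt_of_ne fun h ↦ hms (hr h ▸ hy)
    have hle_m : {z ∈ insert m s | r z ≤ r m} = insert m s :=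
      filter_true_of_mem fun z hz ↦ (mem_insert.1 hz).elim (fun h ↦ h ▸ le_rfl) (hmax z)
    have hlt_m : {z ∈ insert m s | r z < r m} = s := by
      rw [filter_insert, if_neg (lt_irrefl _)]
      exact filter_true_of_mem hlt
    have hrest : ∑ y ∈ s, (f (∑ z ∈ insert m s with r z ≤ r y, p z) -
        f (∑ z ∈ insert m s with r z < r y, p z)) = f (∑ z ∈ s, p z) := by
      rw [← ih]
      refine sum_congr rfl fun y hy ↦ ?_
      rw [filter_insert, if_neg (hlt y hy).not_ge, filter_insert, if_neg (hlt y hy).asymm]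
    rw [sum_insert hms, hle_m, hlt_m, hrest]
    abel

end Finset

theorem stmt_3
    {Y : Type*} [Fintype Y]
    (p : Y → ℝ) (r : Y → ℝ)
    (hp : ∀ y, 0 < p y) (hsum : ∑ y, p y = 1)
    (hr : Function.Injective r)
    (n : ℕ) (hn : 1 ≤ n) :
    (∀ y : Y,
      0 ≤ (∑ z ∈ Finset.univ.filter (fun z => r z ≤ r y), p z) ^ n -
          (∑ z ∈ Finset.univ.filter (fun z => r z < r y), p z) ^ n) ∧
    (∑ y : Y,
        ((∑ z ∈ Finset.univ.filter (fun z => r z ≤ r y), p z) ^ n -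
         (∑ z ∈ Finset.univ.filter (fun z => r z < r y), p z) ^ n)) = 1 := by
  classical
  refine ⟨fun y ↦ sub_nonneg.2 (pow_le_pow_left₀ (sum_nonneg fun z _ ↦ (hp z).le) ?_ n), ?_⟩
  · exact sum_le_sum_of_subset_of_nonneg (monotone_filter_right _ fun _ _ ↦ le_of_lt)
      fun z _ _ ↦ (hp z).le
  · rw [sum_sub_filter_le_filter_lt_eq univ r hr p (· ^ n) (zero_pow (by omega)), hsum, one_pow]
end

section
/- Define g_n(a,b) = (bⁿ − aⁿ) log(n(b−a)/(bⁿ − aⁿ)) + (n−1)(bⁿ log b − aⁿ log a) − ((n−1)/n)(bⁿ − aⁿ) for 0 ≤ a < b ≤ 1 and n ≥ 1. Then g_n(a,b) ≥ 0. -/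
open Real

theorem stmt_7 (n : ℕ) (hn : 1 ≤ n) (a b : ℝ)
    (ha : 0 ≤ a) (hab : a < b) (hb : b ≤ 1) :
    0 ≤ (b ^ n - a ^ n) * Real.log ((n : ℝ) * (b - a) / (b ^ n - a ^ n)) +
        ((n : ℝ) - 1) * (b ^ n * Real.log b - a ^ n * Real.log a) -
        (((n : ℝ) - 1) / n) * (b ^ n - a ^ n) := by
  have hD : 0 < b - a := sub_pos.2 hab
  rcases eq_or_lt_of_le hn with h1 | h2
  · -- n = 1 : the expression is identically 0
    subst h1
    simp only [pow_one, Nat.cast_one, one_mul, div_self hD.ne', Real.log_one]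
    norm_num
  · -- n ≥ 2
    obtain ⟨m, rfl⟩ : ∃ m, n = m + 2 := ⟨n - 2, by omega⟩
    clear hn h2
    push_cast
    have hS : 0 < b ^ (m + 2) - a ^ (m + 2) :=
      sub_pos.2 (pow_lt_pow_left₀ hab ha (by omega))
    set S : ℝ := b ^ (m + 2) - a ^ (m + 2) with hSdef
    set L : ℝ := Real.log (((m : ℝ) + 2) * (b - a) / S) with hLdef
    set c : ℝ := (m : ℝ) + 2 with hcdef
    have hc0 : (0 : ℝ) < c := by positivity
    -- continuity facts
    have hcf1 : Continuous fun w : ℝ => c * w ^ (m + 1) :=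
      continuous_const.mul (continuous_pow _)
    have hcf2 : Continuous fun w : ℝ => c * w ^ (m + 1) * Real.log w := by
      have he : (fun w : ℝ => c * w ^ (m + 1) * Real.log w)
          = fun w : ℝ => c * (w ^ m * (w * Real.log w)) := by
        funext w; rw [pow_succ]; ring
      rw [he]
      exact continuous_const.mul ((continuous_pow m).mul Real.continuous_mul_log)
    -- the two basic integrals
    have hc1 : ((m : ℝ) + 1 + 1) ≠ 0 := by positivity
    have I1 : ∫ w in a..b, c * w ^ (m + 1) = S := by
      rw [intervalIntegral.integral_const_mul, integral_pow]
      push_cast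
      rw [hSdef, hcdef]
      field_simp
      ring
    have I2 : ∫ w in a..b, c * w ^ (m + 1) * Real.log w
        = (b ^ (m + 2) * Real.log b - b ^ (m + 2) / c)
          - (a ^ (m + 2) * Real.log a - a ^ (m + 2) / c) := by
      refine intervalIntegral.integral_eq_sub_of_hasDeriv_right_of_le
        (f := fun w => w ^ (m + 2) * Real.log w - w ^ (m + 2) / c) hab.le ?_ ?_ ?_
      · apply Continuous.continuousOn
        have he : (fun w : ℝ => w ^ (m + 2) * Real.log w - w ^ (m + 2) / c)
            = fun w : ℝ => w ^ (m + 1) * (w * Real.log w) - w ^ (m + 2) / c := by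
          funext w; rw [pow_succ]; ring
        rw [he]
        exact ((continuous_pow _).mul Real.continuous_mul_log).sub
          ((continuous_pow _).div_const _)
      · intro w hw
        have hw0 : 0 < w := lt_of_le_of_lt ha hw.1
        have h1 : HasDerivAt (fun w : ℝ => w ^ (m + 2))
            ((↑(m + 2) : ℝ) * w ^ (m + 1)) w := by
          simpa using hasDerivAt_pow (m + 2) w
        have hlog : HasDerivAt Real.log w⁻¹ w := Real.hasDerivAt_log hw0.ne'
        have h3 := (h1.mul hlog).sub (h1.div_const c)
        have hval : (↑(m + 2) : ℝ) * w ^ (m + 1) * Real.log w + w ^ (m + 2) * w⁻¹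
            - (↑(m + 2) : ℝ) * w ^ (m + 1) / c = c * w ^ (m + 1) * Real.log w := by
          rw [hcdef]
          push_cast
          field_simp
          ring
        rw [hval] at h3
        exact h3.hasDerivWithinAt
      · exact hcf2.intervalIntegrable a b
    -- pointwise inequality
    have hpt : ∀ w ∈ Set.Icc a b,
        c * w ^ (m + 1) - S / (b - a)
          ≤ c * w ^ (m + 1) * L + ((m : ℝ) + 1) * (c * w ^ (m + 1) * Real.log w) := by
      intro w hw
      rcases eq_or_lt_of_le (ha.trans hw.1) with h0 | h0
      · rw [← h0]
        have hzp : (0 : ℝ) ^ (m + 1) = 0 := by simp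
        rw [hzp]
        have : (0 : ℝ) ≤ S / (b - a) := div_nonneg hS.le hD.le
        nlinarith
      · -- w > 0
        set t : ℝ := c * w ^ (m + 1) with htdef
        have ht : 0 < t := by positivity
        set u : ℝ := t * (b - a) / S with hudef
        have hu : 0 < u := by positivity
        have e2 : Real.log u = L + ((m : ℝ) + 1) * Real.log w := by
          have e1 : u = (c * (b - a) / S) * w ^ (m + 1) := by
            rw [hudef, htdef]; ring
          have hcd : c * (b - a) / S ≠ 0 := by positivity
          rw [e1, Real.log_mul hcd (pow_ne_zero _ h0.ne'), Real.log_pow, hLdef]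
          push_cast
          ring
        have key : 1 - u⁻¹ ≤ Real.log u := by
          have := Real.log_le_sub_one_of_pos (show (0 : ℝ) < u⁻¹ by positivity)
          rw [Real.log_inv] at this
          linarith
        have h5 : t * (1 - u⁻¹) ≤ t * Real.log u :=
          mul_le_mul_of_nonneg_left key ht.le
        have h6 : t * (1 - u⁻¹) = t - S / (b - a) := by
          rw [hudef]
          field_simp
        have h7 : t * Real.log u = t * L + ((m : ℝ) + 1) * (t * Real.log w) := by
          rw [e2]; ring
        rw [h6, h7] at h5
        exact h5
    -- integrate the pointwise inequality
    have hint_r : IntervalIntegrable (fun w => c * w ^ (m + 1) - S / (b - a))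
        MeasureTheory.volume a b := (hcf1.sub continuous_const).intervalIntegrable a b
    have hint_h : IntervalIntegrable
        (fun w => c * w ^ (m + 1) * L + ((m : ℝ) + 1) * (c * w ^ (m + 1) * Real.log w))
        MeasureTheory.volume a b :=
      ((hcf1.mul continuous_const).add (continuous_const.mul hcf2)).intervalIntegrable a b
    have hmono := intervalIntegral.integral_mono_on hab.le hint_r hint_h hpt
    have Er : ∫ w in a..b, (c * w ^ (m + 1) - S / (b - a)) = 0 := by
      rw [intervalIntegral.integral_sub (hcf1.intervalIntegrable a b)
        (intervalIntegrable_const), I1, intervalIntegral.integral_const, smul_eq_mul]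
      field_simp
      ring
    have Eh : ∫ w in a..b,
        (c * w ^ (m + 1) * L + ((m : ℝ) + 1) * (c * w ^ (m + 1) * Real.log w))
        = S * L + ((m : ℝ) + 1) * ((b ^ (m + 2) * Real.log b - b ^ (m + 2) / c)
            - (a ^ (m + 2) * Real.log a - a ^ (m + 2) / c)) := by
      rw [intervalIntegral.integral_add (f := fun w => c * w ^ (m + 1) * L)
        (g := fun w => ((m : ℝ) + 1) * (c * w ^ (m + 1) * Real.log w)) ((hcf1.mul continuous_const).intervalIntegrable a b)
        ((continuous_const.mul hcf2).intervalIntegrable a b)]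
      have e1 : ∫ w in a..b, c * w ^ (m + 1) * L = S * L := by
        rw [intervalIntegral.integral_mul_const L fun w => c * w ^ (m + 1), I1]
      have e2 : ∫ w in a..b, ((m : ℝ) + 1) * (c * w ^ (m + 1) * Real.log w)
          = ((m : ℝ) + 1) * ((b ^ (m + 2) * Real.log b - b ^ (m + 2) / c)
            - (a ^ (m + 2) * Real.log a - a ^ (m + 2) / c)) := by
        rw [intervalIntegral.integral_const_mul, I2]
      rw [e1, e2]
    rw [Er, Eh] at hmono
    have hfin : S * L + ((m : ℝ) + 2 - 1) * (b ^ (m + 2) * Real.log b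
          - a ^ (m + 2) * Real.log a) - (((m : ℝ) + 2 - 1) / ((m : ℝ) + 2)) * S
        = S * L + ((m : ℝ) + 1) * ((b ^ (m + 2) * Real.log b - b ^ (m + 2) / c)
            - (a ^ (m + 2) * Real.log a - a ^ (m + 2) / c)) := by
      rw [hcdef]
      field_simp
      ring
    linarith [hmono, hfin]
end

section
/- For any 0 ≤ a < b ≤ 1 and natural number n ≥ 1, the quantity g_n(a,b) = (bⁿ − aⁿ) log(n(b−a)/(bⁿ − aⁿ)) + (n−1)(bⁿ log b − aⁿ log a) − ((n−1)/n)(bⁿ − aⁿ) satisfies g_n(a,b) ≤ 2n(n−1)(b−a)². -/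
open Real

private lemma aux_pow_sub_pow_le (a b : ℝ) (ha : 0 ≤ a) (hab : a ≤ b) (hb : b ≤ 1) :
    ∀ k : ℕ, b ^ k - a ^ k ≤ (k : ℝ) * (b - a) := by
  intro k
  induction k with
  | zero => simp
  | succ k ih =>
    have h1 : a ^ k ≤ b ^ k := pow_le_pow_left₀ ha hab k
    have h2 : a ^ k ≤ 1 := pow_le_one₀ ha (hab.trans hb)
    have h3 : b * (b ^ k - a ^ k) ≤ b ^ k - a ^ k :=
      mul_le_of_le_one_left (sub_nonneg.mpr h1) hb
    have h4 : b ^ (k+1) - a ^ (k+1) = b * (b ^ k - a ^ k) + a ^ k * (b - a) := by ring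
    push_cast
    nlinarith

theorem stmt_8 (n : ℕ) (hn : 1 ≤ n) (a b : ℝ)
    (ha : 0 ≤ a) (hab : a < b) (hb : b ≤ 1) :
    (b ^ n - a ^ n) * Real.log ((n : ℝ) * (b - a) / (b ^ n - a ^ n)) +
      ((n : ℝ) - 1) * (b ^ n * Real.log b - a ^ n * Real.log a) -
      (((n : ℝ) - 1) / n) * (b ^ n - a ^ n) ≤
      2 * n * ((n : ℝ) - 1) * (b - a) ^ 2 := by
  have hb0 : 0 < b := lt_of_le_of_lt ha hab
  have hba : 0 < b - a := sub_pos.mpr hab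
  obtain ⟨m, rfl⟩ : ∃ m, n = m + 1 := ⟨n - 1, (Nat.succ_pred_eq_of_pos hn).symm⟩
  rcases Nat.eq_zero_or_pos m with rfl | hm
  · -- case n = 1
    simp only [zero_add, pow_one, Nat.cast_one]
    rw [one_mul, div_self hba.ne', Real.log_one]
    norm_num
  -- now n = m + 1 with m ≥ 1
  set T : ℝ := ∑ i ∈ Finset.range (m+1), b ^ i * a ^ (m - i) with hTdef
  have hgeom : T * (b - a) = b ^ (m+1) - a ^ (m+1) := by
    rw [hTdef]; exact geom_sum₂_mul b a (m+1)
  have hTpos : 0 < T := by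
    rw [hTdef]
    apply Finset.sum_pos'
    · intro i _; positivity
    · refine ⟨m, Finset.mem_range.mpr (Nat.lt_succ_self m), ?_⟩
      simp only [Nat.sub_self, pow_zero, mul_one]
      positivity
  have hN : (0:ℝ) < (m:ℝ) + 1 := by positivity
  -- lower bound T ≥ (m+1) a^m
  have hTla : ((m:ℝ) + 1) * a ^ m ≤ T := by
    have h : ∀ i ∈ Finset.range (m+1), a ^ m ≤ b ^ i * a ^ (m - i) := by
      intro i hi
      have hi' : i ≤ m := Nat.lt_succ_iff.mp (Finset.mem_range.mp hi)
      calc a ^ m = a ^ i * a ^ (m - i) := by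
            rw [← pow_add, Nat.add_sub_cancel' hi']
        _ ≤ b ^ i * a ^ (m - i) :=
            mul_le_mul_of_nonneg_right (pow_le_pow_left₀ ha hab.le i) (pow_nonneg ha _)
    have := Finset.card_nsmul_le_sum (Finset.range (m+1)) _ _ h
    rw [Finset.card_range, nsmul_eq_mul] at this
    push_cast at this
    rw [hTdef]
    linarith
  -- key termwise bound: (m+1) b^m - T ≤ (m+1)(m(b-a))
  have hkey : ((m:ℝ) + 1) * b ^ m - T ≤ ((m:ℝ) + 1) * ((m:ℝ) * (b - a)) := by
    have hterm : ∀ i ∈ Finset.range (m+1),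
        b ^ m - b ^ i * a ^ (m - i) ≤ (m:ℝ) * (b - a) := by
      intro i hi
      have hi' : i ≤ m := Nat.lt_succ_iff.mp (Finset.mem_range.mp hi)
      have e : b ^ m = b ^ i * b ^ (m - i) := by
        rw [← pow_add, Nat.add_sub_cancel' hi']
      have d1 : b ^ (m - i) - a ^ (m - i) ≤ ((m - i : ℕ):ℝ) * (b - a) :=
        aux_pow_sub_pow_le a b ha hab.le hb _
      have d0 : 0 ≤ b ^ (m - i) - a ^ (m - i) :=
        sub_nonneg.mpr (pow_le_pow_left₀ ha hab.le _)
      have hbi : b ^ i ≤ 1 := pow_le_one₀ hb0.le hb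
      have h5 : b ^ i * (b ^ (m - i) - a ^ (m - i)) ≤ b ^ (m - i) - a ^ (m - i) :=
        mul_le_of_le_one_left d0 hbi
      have hc : ((m - i : ℕ):ℝ) ≤ (m:ℝ) := by exact_mod_cast Nat.sub_le m i
      have e2 : b ^ m - b ^ i * a ^ (m - i) = b ^ i * (b ^ (m - i) - a ^ (m - i)) := by
        rw [e]; ring
      nlinarith
    have hsum : ∑ i ∈ Finset.range (m+1), (b ^ m - b ^ i * a ^ (m - i))
        ≤ ((m:ℝ) + 1) * ((m:ℝ) * (b - a)) := by
      have := Finset.sum_le_card_nsmul (Finset.range (m+1)) _ _ hterm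
      rw [Finset.card_range, nsmul_eq_mul] at this
      push_cast at this
      linarith
    have hsplit : ∑ i ∈ Finset.range (m+1), (b ^ m - b ^ i * a ^ (m - i))
        = ((m:ℝ) + 1) * b ^ m - T := by
      rw [Finset.sum_sub_distrib, Finset.sum_const, Finset.card_range, nsmul_eq_mul, hTdef]
      push_cast
      ring
    linarith [hsplit ▸ hsum]
  -- log rewrites
  set R : ℝ := ((m:ℝ) + 1) * b ^ m / T with hRdef
  have hR : 0 < R := by positivity
  have hlogR : Real.log R = Real.log ((m:ℝ) + 1) + (m:ℝ) * Real.log b - Real.log T := by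
    rw [hRdef, Real.log_div (by positivity) hTpos.ne', Real.log_mul hN.ne' (pow_pos hb0 m).ne',
      Real.log_pow]
  have hlog1 : Real.log (((m:ℝ) + 1) * (b - a) / (T * (b - a)))
      = Real.log ((m:ℝ) + 1) - Real.log T := by
    rw [mul_div_mul_right _ _ hba.ne', Real.log_div hN.ne' hTpos.ne']
  -- step 3: a^(m+1) (log b - log a) ≤ T(b-a)/(m+1)
  have step3 : a ^ (m+1) * (Real.log b - Real.log a) ≤ T * (b - a) / ((m:ℝ) + 1) := by
    rcases eq_or_lt_of_le ha with rfl | ha'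
    · simp only [zero_pow (Nat.succ_ne_zero m), zero_mul]
      positivity
    · have hlog : Real.log b - Real.log a ≤ (b - a) / a := by
        have h1 := Real.log_le_sub_one_of_pos (div_pos hb0 ha')
        rw [Real.log_div hb0.ne' ha'.ne'] at h1
        have h2 : b / a - 1 = (b - a) / a := by field_simp
        linarith
      have h1 : a ^ (m+1) * (Real.log b - Real.log a) ≤ a ^ (m+1) * ((b - a) / a) :=
        mul_le_mul_of_nonneg_left hlog (pow_nonneg ha _)
      have h2 : a ^ (m+1) * ((b - a) / a) = a ^ m * (b - a) := by
        field_simp [pow_succ]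
        ring
      have h3 : a ^ m * (b - a) ≤ T * (b - a) / ((m:ℝ) + 1) := by
        rw [le_div_iff₀ hN]
        nlinarith
      linarith
  -- rewrite the goal
  push_cast
  rw [show b ^ (m+1) - a ^ (m+1) = T * (b - a) from hgeom.symm, hlog1]
  have step2 : b ^ (m+1) * Real.log b - a ^ (m+1) * Real.log a
      = T * (b - a) * Real.log b + a ^ (m+1) * (Real.log b - Real.log a) := by
    rw [show T * (b - a) = b ^ (m+1) - a ^ (m+1) from hgeom]
    ring
  have E1 : T * (b - a) * (Real.log ((m:ℝ) + 1) - Real.log T) +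
      ((m:ℝ) + 1 - 1) * (b ^ (m+1) * Real.log b - a ^ (m+1) * Real.log a) -
      (((m:ℝ) + 1 - 1) / ((m:ℝ) + 1)) * (T * (b - a))
      = T * (b - a) * Real.log R +
        (m:ℝ) * (a ^ (m+1) * (Real.log b - Real.log a) - T * (b - a) / ((m:ℝ) + 1)) := by
    rw [step2, hlogR]
    field_simp
    ring
  rw [E1]
  have I1 : Real.log R ≤ R - 1 := Real.log_le_sub_one_of_pos hR
  have C1 : T * (b - a) * Real.log R ≤ T * (b - a) * (R - 1) :=
    mul_le_mul_of_nonneg_left I1 (by positivity)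
  have C2 : T * (b - a) * (R - 1) = (b - a) * (((m:ℝ) + 1) * b ^ m - T) := by
    rw [hRdef]
    field_simp
  have C3 : (b - a) * (((m:ℝ) + 1) * b ^ m - T)
      ≤ (b - a) * (((m:ℝ) + 1) * ((m:ℝ) * (b - a))) :=
    mul_le_mul_of_nonneg_left hkey hba.le
  have C4 : (m:ℝ) * (a ^ (m+1) * (Real.log b - Real.log a) - T * (b - a) / ((m:ℝ) + 1)) ≤ 0 :=
    mul_nonpos_of_nonneg_of_nonpos (Nat.cast_nonneg m) (by linarith)
  have C5 : 0 ≤ ((m:ℝ) + 1) * ((m:ℝ) * (b - a) ^ 2) := by positivity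
  nlinarith
end

section
/- Let p be a probability mass function on a finite set Y with injective reward r, let F and F⁻ be the reward CDF and strict CDF under p, and let π⁽ⁿ⁾(y) = F(y)ⁿ − F⁻(y)ⁿ be the best-of-n policy. Then for every n ≥ 1, KL(π⁽ⁿ⁾ ‖ p) = Σ_y π⁽ⁿ⁾(y) log(π⁽ⁿ⁾(y)/p(y)) ≤ log(n) − (n−1)/n. -/
open Finset Real

lemma geomP (n : ℕ) (t : ℝ) : (1 - t) * ∑ k ∈ range n, t ^ k = 1 - t ^ n := by
  induction n with
  | zero => simp
  | succ n ih => rw [sum_range_succ, mul_add, ih]; ring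

lemma derivP (n : ℕ) (hn : 1 ≤ n) (t : ℝ) :
    (1 - t) * ∑ k ∈ range n, (k : ℝ) * t ^ (k - 1) =
      (∑ k ∈ range n, t ^ k) - n * t ^ (n - 1) := by
  induction n with
  | zero => simp
  | succ n ih =>
    rcases Nat.eq_zero_or_pos n with h | h
    · subst h; simp
    · rw [sum_range_succ, mul_add, ih h, sum_range_succ]
      have h1 : t ^ (n - 1) * t = t ^ n := by
        rw [← pow_succ, Nat.sub_add_cancel h]
      push_cast
      nlinarith [h1]

lemma Ppos (n : ℕ) (hn : 1 ≤ n) {t : ℝ} (ht : 0 ≤ t) :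
    1 ≤ ∑ k ∈ range n, t ^ k := by
  calc (1:ℝ) = t ^ 0 := by simp
  _ ≤ ∑ k ∈ range n, t ^ k := by
      apply Finset.single_le_sum (f := fun k => t ^ k)
        (fun i _ => pow_nonneg ht i)
      simpa using (show 0 < n by omega)

lemma keyQ (n : ℕ) (hn : 1 ≤ n) (t : ℝ) (ht0 : 0 ≤ t) (ht1 : t < 1) :
    0 ≤ -((n:ℝ)-1) * (t^n * Real.log t) - ((n:ℝ)-1)*(1-t^n)/n
        + (1-t^n) * (Real.log n - Real.log (∑ k ∈ range n, t^k)) := by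
  have hnR : (0:ℝ) < n := by exact_mod_cast hn
  rcases eq_or_lt_of_le ht0 with h0 | h0
  · -- t = 0
    subst h0
    have hs : ∑ k ∈ range n, (0:ℝ) ^ k = 1 := by
      rw [Finset.sum_eq_single 0]
      · simp
      · intro k hk hk0; exact zero_pow hk0
      · intro h; simp at h; omega
    have hz : (0:ℝ) ^ n = 0 := zero_pow (by omega)
    rw [hs, hz]
    have hlog : Real.log ((n:ℝ)⁻¹) ≤ (n:ℝ)⁻¹ - 1 :=
      Real.log_le_sub_one_of_pos (by positivity)
    rw [Real.log_inv] at hlog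
    have h1n : (1:ℝ)/n ≤ 1 := by
      rw [div_le_one hnR]; exact_mod_cast hn
    simp only [Real.log_zero, Real.log_one]
    have hd : ((n:ℝ)-1) * (1 - 0) / n = 1 - 1/n := by field_simp; ring
    rw [hd]
    simp only [one_div] at *
    linarith
  · -- 0 < t < 1
    set P : ℝ → ℝ := fun s => ∑ k ∈ range n, s ^ k with hPdef
    set Q : ℝ → ℝ := fun s => -((n:ℝ)-1) * (s^n * Real.log s) - ((n:ℝ)-1)*(1-s^n)/n
        + (1-s^n) * (Real.log n - Real.log (P s)) with hQdef
    have hPpos : ∀ s : ℝ, 0 ≤ s → 0 < P s := fun s hs =>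
      lt_of_lt_of_le zero_lt_one (Ppos n hn hs)
    have hPcont : Continuous P := by
      apply continuous_finset_sum; intro i _; exact continuous_pow i
    have hQcont : ContinuousOn Q (Set.Icc t 1) := by
      have hsub : ∀ s ∈ Set.Icc t 1, s ≠ 0 := fun s hs =>
        (lt_of_lt_of_le h0 hs.1).ne'
      apply ContinuousOn.add
      · apply ContinuousOn.sub
        · exact continuousOn_const.mul ((continuous_pow n).continuousOn.mul
            (Real.continuousOn_log.mono (by intro s hs; simpa using hsub s hs)))
        · exact ((continuousOn_const.mul
            (continuousOn_const.sub (continuous_pow n).continuousOn)).div_const _)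
      · apply ContinuousOn.mul
        · exact continuousOn_const.sub (continuous_pow n).continuousOn
        · apply ContinuousOn.sub continuousOn_const
          apply ContinuousOn.log hPcont.continuousOn
          intro s hs
          exact (hPpos s (le_trans h0.le hs.1)).ne'
    have hderiv : ∀ x ∈ Set.Ioo t 1, HasDerivAt Q
        (-((n:ℝ)-1) * ((n:ℝ)*x^(n-1)*Real.log x + x^n * x⁻¹)
          - ((n:ℝ)-1)*(-( (n:ℝ)*x^(n-1)))/n
          + ((-((n:ℝ)*x^(n-1))) * (Real.log n - Real.log (P x))
            + (1-x^n) * (0 - (∑ k ∈ range n, (k:ℝ) * x^(k-1)) / (P x)))) x := by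
      intro x hx
      have hx0 : (0:ℝ) < x := lt_trans h0 hx.1
      have hPd : HasDerivAt P (∑ k ∈ range n, (k:ℝ) * x^(k-1)) x := by
        apply HasDerivAt.fun_sum
        intro k _
        exact hasDerivAt_pow k x
      have h1 : HasDerivAt (fun s : ℝ => s^n * Real.log s)
          ((n:ℝ)*x^(n-1)*Real.log x + x^n * x⁻¹) x :=
        (hasDerivAt_pow n x).mul (Real.hasDerivAt_log hx0.ne')
      have h2 : HasDerivAt (fun s : ℝ => 1 - s^n) (-((n:ℝ)*x^(n-1))) x := by
        simpa using (hasDerivAt_pow n x).const_sub 1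
      have h3 : HasDerivAt (fun s => Real.log (P s))
          ((∑ k ∈ range n, (k:ℝ) * x^(k-1)) / (P x)) x :=
        hPd.log (hPpos x hx0.le).ne'
      exact ((h1.const_mul (-((n:ℝ)-1))).sub ((h2.const_mul ((n:ℝ)-1)).div_const n)).add
        (h2.mul ((hasDerivAt_const x (Real.log n)).sub h3))
    have hanti : AntitoneOn Q (Set.Icc t 1) := by
      apply antitoneOn_of_deriv_nonpos (convex_Icc t 1) hQcont
      · intro x hx
        rw [interior_Icc] at hx
        exact (hderiv x hx).differentiableAt.differentiableWithinAt
      · intro x hx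
        rw [interior_Icc] at hx
        rw [(hderiv x hx).deriv]
        have hx0 : (0:ℝ) < x := lt_trans h0 hx.1
        have hx1 : x < 1 := hx.2
        set S := P x with hS
        set D := ∑ k ∈ range n, (k:ℝ) * x^(k-1) with hD
        have hSpos : 0 < S := hPpos x hx0.le
        have hA : (0:ℝ) < x^(n-1) := pow_pos hx0 _
        have hnA : (0:ℝ) < (n:ℝ) * x^(n-1) := by positivity
        have f1 : (1-x) * D = S - (n:ℝ)*x^(n-1) := derivP n hn x
        have f2 : (1-x) * S = 1 - x^n := geomP n x
        have f5 : x^n * x⁻¹ = x^(n-1) := by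
          have : x^(n-1) * x = x^n := by rw [← pow_succ, Nat.sub_add_cancel hn]
          rw [← this]
          field_simp
        have f7 : Real.log ((n:ℝ) * x^(n-1)) = Real.log n + ((n:ℝ)-1) * Real.log x := by
          rw [Real.log_mul (by positivity) (by positivity), Real.log_pow]
          have : ((n - 1 : ℕ) : ℝ) = (n:ℝ) - 1 := by
            push_cast [Nat.cast_sub hn]; ring
          rw [this]
        have f6 : Real.log S - (Real.log n + ((n:ℝ)-1) * Real.log x) ≤ S/((n:ℝ)*x^(n-1)) - 1 := by
          have h := Real.log_le_sub_one_of_pos (show 0 < S/((n:ℝ)*x^(n-1)) by positivity)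
          rw [Real.log_div hSpos.ne' hnA.ne', f7] at h
          linarith
        have hmul : (n:ℝ)*x^(n-1) * (Real.log S - (Real.log n + ((n:ℝ)-1) * Real.log x))
            ≤ S - (n:ℝ)*x^(n-1) := by
          have h := mul_le_mul_of_nonneg_left f6 hnA.le
          have he : (n:ℝ)*x^(n-1) * (S/((n:ℝ)*x^(n-1)) - 1) = S - (n:ℝ)*x^(n-1) := by
            field_simp
          rw [he] at h
          exact h
        have e2 : (1-x^n) * (0 - D/S) = -((1-x)*D) := by
          rw [← f2]
          field_simp
          ring
        have hEeq : -((n:ℝ)-1) * ((n:ℝ)*x^(n-1)*Real.log x + x^n * x⁻¹)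
          - ((n:ℝ)-1)*(-( (n:ℝ)*x^(n-1)))/n
          + ((-((n:ℝ)*x^(n-1))) * (Real.log n - Real.log S)
            + (1-x^n) * (0 - D / S))
            = (n:ℝ)*x^(n-1) * (Real.log S - (Real.log n + ((n:ℝ)-1) * Real.log x))
              - (1-x)*D := by
          rw [f5, e2]
          field_simp
          ring
        rw [hEeq]
        linarith [hmul, f1]
    have hmem1 : (1:ℝ) ∈ Set.Icc t 1 := ⟨ht1.le, le_refl 1⟩
    have hmemt : t ∈ Set.Icc t 1 := ⟨le_refl t, ht1.le⟩
    have h := hanti hmemt hmem1 ht1.le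
    have hQ1 : Q 1 = 0 := by
      simp [hQdef]
    rw [hQ1] at h
    exact h


noncomputable def Gfun (n : ℕ) (x : ℝ) : ℝ :=
  ((n:ℝ)-1) * (x^n * Real.log x) - ((n:ℝ)-1)*x^n/n + x^n * Real.log n

lemma bucket (n : ℕ) (hn : 1 ≤ n) (a b : ℝ) (ha : 0 ≤ a) (hab : a < b) :
    (b^n - a^n) * Real.log ((b^n - a^n)/(b - a)) ≤ Gfun n b - Gfun n a := by
  have hb : 0 < b := lt_of_le_of_lt ha hab
  set t := a / b with htdef
  have ht0 : 0 ≤ t := div_nonneg ha hb.le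
  have ht1 : t < 1 := (div_lt_one hb).2 hab
  have hat : a = t * b := by rw [htdef, div_mul_cancel₀ _ hb.ne']
  set S := ∑ k ∈ range n, t ^ k with hSdef
  have hSpos : (0:ℝ) < S := lt_of_lt_of_le zero_lt_one (Ppos n hn ht0)
  have h6 : a ^ n = t ^ n * b ^ n := by rw [hat, mul_pow]
  have hbn : b^(n-1) * b = b^n := by rw [← pow_succ, Nat.sub_add_cancel hn]
  have hg : (1 - t) * S = 1 - t^n := geomP n t
  have hcast : ((n - 1 : ℕ) : ℝ) = (n:ℝ) - 1 := by
    push_cast [Nat.cast_sub hn]; ring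
  have h3 : (b^n - a^n)/(b - a) = b^(n-1) * S := by
    rw [div_eq_iff (show b - a ≠ 0 by linarith)]
    rw [h6, hat]
    linear_combination (-(1-t^n))*hbn + (-(b^(n-1)*b))*hg
  have h4 : Real.log ((b^n - a^n)/(b - a)) = ((n:ℝ)-1) * Real.log b + Real.log S := by
    rw [h3, Real.log_mul (pow_pos hb _).ne' hSpos.ne', Real.log_pow, hcast]
  have h5 : a^n * Real.log a = t^n * b^n * (Real.log t + Real.log b) := by
    rcases eq_or_lt_of_le ha with h0 | h0
    · have ht0' : t = 0 := by rw [htdef, ← h0, zero_div]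
      rw [← h0, ht0', zero_pow (show n ≠ 0 by omega)]; simp
    · have htpos : 0 < t := div_pos h0 hb
      rw [h6, hat, Real.log_mul htpos.ne' hb.ne']
  have hQ := keyQ n hn t ht0 ht1
  have hbn0 : (0:ℝ) ≤ b^n := pow_nonneg hb.le n
  have hkey : 0 ≤ b^n * (-((n:ℝ)-1) * (t^n * Real.log t) - ((n:ℝ)-1)*(1-t^n)/n
        + (1-t^n) * (Real.log n - Real.log S)) := mul_nonneg hbn0 hQ
  have hiden : Gfun n b - Gfun n a - (b^n - a^n) * Real.log ((b^n - a^n)/(b - a))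
      = b^n * (-((n:ℝ)-1) * (t^n * Real.log t) - ((n:ℝ)-1)*(1-t^n)/n
        + (1-t^n) * (Real.log n - Real.log S)) := by
    unfold Gfun
    rw [h4, h5, h6]
    ring
  linarith


lemma telescope {Y : Type*} [LinearOrder Y] (p : Y → ℝ) (g : ℝ → ℝ) (s : Finset Y) :
    ∑ y ∈ s, (g (∑ z ∈ s.filter (fun z => z ≤ y), p z)
        - g (∑ z ∈ s.filter (fun z => z < y), p z)) = g (∑ z ∈ s, p z) - g 0 := by
  classical
  induction s using Finset.induction_on_max with
  | empty => simp
  | insert b s hb ih =>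
    have hbs : b ∉ s := fun h => absurd (hb b h) (lt_irrefl b)
    rw [Finset.sum_insert hbs]
    have hfilb_le : (insert b s).filter (fun z => z ≤ b) = insert b s := by
      apply Finset.filter_true_of_mem
      intro x hx
      rcases Finset.mem_insert.1 hx with h | h
      · exact le_of_eq h
      · exact (hb x h).le
    have hfilb_lt : (insert b s).filter (fun z => z < b) = s := by
      ext x
      simp only [Finset.mem_filter, Finset.mem_insert]
      constructor
      · rintro ⟨h | h, hlt⟩
        · exact absurd hlt (by simp [h])
        · exact h
      · intro hx; exact ⟨Or.inr hx, hb x hx⟩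
    have hrest : ∀ y ∈ s, (insert b s).filter (fun z => z ≤ y) = s.filter (fun z => z ≤ y) ∧
        (insert b s).filter (fun z => z < y) = s.filter (fun z => z < y) := by
      intro y hy
      constructor <;>
      · ext x
        simp only [Finset.mem_filter, Finset.mem_insert]
        constructor
        · rintro ⟨h | h, hle⟩
          · subst h
            exact absurd hle (by simp [not_le.2 (hb y hy), not_lt.2 (hb y hy).le])
          · exact ⟨h, hle⟩
        · rintro ⟨h, hle⟩; exact ⟨Or.inr h, hle⟩
    have hsum_congr : ∑ y ∈ s, (g (∑ z ∈ (insert b s).filter (fun z => z ≤ y), p z)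
        - g (∑ z ∈ (insert b s).filter (fun z => z < y), p z))
        = ∑ y ∈ s, (g (∑ z ∈ s.filter (fun z => z ≤ y), p z)
        - g (∑ z ∈ s.filter (fun z => z < y), p z)) := by
      apply Finset.sum_congr rfl
      intro y hy
      rw [(hrest y hy).1, (hrest y hy).2]
    rw [hfilb_le, hfilb_lt, hsum_congr, ih]
    ring




theorem stmt_9
    {Y : Type*} [Fintype Y]
    (p : Y → ℝ) (r : Y → ℝ)
    (hp : ∀ y, 0 < p y) (hsum : ∑ y, p y = 1)
    (hr : Function.Injective r)
    (n : ℕ) (hn : 1 ≤ n)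
    (F Fm : Y → ℝ)
    (hF : ∀ y, F y = ∑ z ∈ Finset.univ.filter (fun z => r z ≤ r y), p z)
    (hFm : ∀ y, Fm y = ∑ z ∈ Finset.univ.filter (fun z => r z < r y), p z) :
    ∑ y : Y, (F y ^ n - Fm y ^ n) * Real.log ((F y ^ n - Fm y ^ n) / p y) ≤
      Real.log n - ((n : ℝ) - 1) / n := by
  classical
  letI : LinearOrder Y := LinearOrder.lift' r hr
  have hle : ∀ z y : Y, z ≤ y ↔ r z ≤ r y := fun _ _ => Iff.rfl
  have hlt : ∀ z y : Y, z < y ↔ r z < r y := fun _ _ => Iff.rfl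
  -- relate F, Fm to order filters
  have hF' : ∀ y, F y = ∑ z ∈ Finset.univ.filter (fun z => z ≤ y), p z := by
    intro y
    rw [hF y]
    apply Finset.sum_congr _ (fun _ _ => rfl)
    ext z
    simp only [Finset.mem_filter, Finset.mem_univ, true_and]
    exact (hle z y).symm
  have hFm' : ∀ y, Fm y = ∑ z ∈ Finset.univ.filter (fun z => z < y), p z := by
    intro y
    rw [hFm y]
    apply Finset.sum_congr _ (fun _ _ => rfl)
    ext z
    simp only [Finset.mem_filter, Finset.mem_univ, true_and]
    exact (hlt z y).symm
  -- F y = Fm y + p y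
  have hins : ∀ y : Y, (Finset.univ.filter (fun z => z < y) : Finset Y) =
      (Finset.univ.filter (fun z => z ≤ y)).erase y := by
    intro y
    ext z
    simp only [Finset.mem_filter, Finset.mem_univ, true_and, Finset.mem_erase]
    constructor
    · intro h; exact ⟨ne_of_lt h, le_of_lt h⟩
    · rintro ⟨hne, hle'⟩; exact lt_of_le_of_ne hle' hne
  have hFFm : ∀ y : Y, F y = Fm y + p y := by
    intro y
    rw [hF' y, hFm' y, hins y]
    have hy : y ∈ Finset.univ.filter (fun z => z ≤ y) := by
      simp [le_refl]
    rw [Finset.sum_erase_eq_sub hy]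
    ring
  have hFm0 : ∀ y : Y, 0 ≤ Fm y := by
    intro y
    rw [hFm' y]
    exact Finset.sum_nonneg fun z _ => (hp z).le
  -- telescoping
  have htel : ∑ y : Y, (Gfun n (F y) - Gfun n (Fm y)) = Gfun n 1 - Gfun n 0 := by
    have h := telescope p (Gfun n) (Finset.univ : Finset Y)
    rw [hsum] at h
    rw [← h]
    apply Finset.sum_congr rfl
    intro y _
    rw [hF' y, hFm' y]
  have hG1 : Gfun n 1 = Real.log n - ((n:ℝ)-1)/n := by
    simp [Gfun]
    ring
  have hG0 : Gfun n 0 = 0 := by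
    simp [Gfun, zero_pow (show n ≠ 0 by omega)]
  calc ∑ y : Y, (F y ^ n - Fm y ^ n) * Real.log ((F y ^ n - Fm y ^ n) / p y)
      ≤ ∑ y : Y, (Gfun n (F y) - Gfun n (Fm y)) := by
        apply Finset.sum_le_sum
        intro y _
        have hab : Fm y < F y := by
          have := hp y
          rw [hFFm y]
          linarith
        have hb := bucket n hn (Fm y) (F y) (hFm0 y) hab
        have hpy : F y - Fm y = p y := by rw [hFFm y]; ring
        rw [← hpy]
        exact hb
    _ = Real.log n - ((n:ℝ)-1)/n := by rw [htel, hG1, hG0]; ring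
end

section
/- With the setup of the best-of-n policy on a finite set with injective rewards, the gap satisfies log(n) − (n−1)/n − KL(π⁽ⁿ⁾ ‖ p) = Σ_y g_n(F⁻(y), F(y)), where g_n(a,b) = (bⁿ − aⁿ) log(n(b−a)/(bⁿ − aⁿ)) + (n−1)(bⁿ log b − aⁿ log a) − ((n−1)/n)(bⁿ − aⁿ). -/
/-! Write `π y = F y ^ n - Fm y ^ n`. Ordering `Y` by reward, `Fm` of each point is `F` of its
predecessor, so `∑ y, (f (F y) - f (Fm y))` telescopes to `f 1 - f 0` for every `f`. With
`f x = x ^ n` this says that `π` is a probability vector, and with `f x = x ^ n log x` that the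
`(n - 1)`-terms of the gap sum to zero. Since `F y - Fm y = p y`, what is left is termwise
`π y log (n p y / π y) = π y log n - π y log (π y / p y)`. -/

open Finset Real

section Telescope

variable {ι α M G : Type*} [LinearOrder α] [AddCommMonoid M] [AddCommGroup G]

theorem Finset.sum_filter_le_eq_sum_filter_lt_add [Fintype ι] {r : ι → α}
    (hr : Function.Injective r) (p : ι → M) (y : ι) :
    ∑ z with r z ≤ r y, p z = ∑ z with r z < r y, p z + p y := by
  classical
  have hinsert : univ.filter (fun z => r z ≤ r y) = insert y (univ.filter fun z => r z < r y) := by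
    ext z
    simp only [mem_filter, mem_insert, mem_univ, true_and, le_iff_lt_or_eq, hr.eq_iff]
    tauto
  rw [hinsert, sum_insert (by simp), add_comm]

theorem Finset.sum_sub_filter_lt_telescope [DecidableEq ι] {r : ι → α}
    (hr : Function.Injective r) (p : ι → M) (f : M → G) (s : Finset ι) :
    ∑ y ∈ s, (f (∑ z ∈ s with r z ≤ r y, p z) - f (∑ z ∈ s with r z < r y, p z)) =
      f (∑ z ∈ s, p z) - f 0 := by
  induction s using Finset.induction_on_max_value r with
  | empty => simp
  | insert a s ha hmax ih =>
    have hlt : ∀ x ∈ s, r x < r a := fun x hx =>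
      (hmax x hx).lt_of_ne fun h => ha (hr h ▸ hx)
    have hrest : ∑ y ∈ s, (f (∑ z ∈ insert a s with r z ≤ r y, p z) -
        f (∑ z ∈ insert a s with r z < r y, p z)) = f (∑ z ∈ s, p z) - f 0 := by
      rw [← ih]
      refine sum_congr rfl fun y hy => ?_
      rw [filter_insert, if_neg (hlt y hy).not_ge, filter_insert, if_neg (hlt y hy).asymm]
    rw [sum_insert ha, filter_insert, if_pos le_rfl, filter_true_of_mem fun x hx => (hlt x hx).le,
      filter_insert, if_neg (lt_irrefl _), filter_true_of_mem hlt, hrest]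
    abel

end Telescope

theorem stmt_10
    {Y : Type*} [Fintype Y]
    (p : Y → ℝ) (r : Y → ℝ)
    (hp : ∀ y, 0 < p y) (hsum : ∑ y, p y = 1)
    (hr : Function.Injective r)
    (n : ℕ) (hn : 1 ≤ n)
    (F Fm : Y → ℝ)
    (hF : ∀ y, F y = ∑ z ∈ Finset.univ.filter (fun z => r z ≤ r y), p z)
    (hFm : ∀ y, Fm y = ∑ z ∈ Finset.univ.filter (fun z => r z < r y), p z) :
    (Real.log n - ((n : ℝ) - 1) / n) -
      ∑ y : Y, (F y ^ n - Fm y ^ n) * Real.log ((F y ^ n - Fm y ^ n) / p y) =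
      ∑ y : Y,
        ((F y ^ n - Fm y ^ n) *
            Real.log ((n : ℝ) * (F y - Fm y) / (F y ^ n - Fm y ^ n)) +
          ((n : ℝ) - 1) * (F y ^ n * Real.log (F y) - Fm y ^ n * Real.log (Fm y)) -
          (((n : ℝ) - 1) / n) * (F y ^ n - Fm y ^ n)) := by
  classical
  have hn0 : n ≠ 0 := by omega
  have hjump : ∀ y, F y - Fm y = p y := fun y => by
    rw [hF, hFm, sum_filter_le_eq_sum_filter_lt_add hr, add_sub_cancel_left]
  have htelescope : ∀ f : ℝ → ℝ, ∑ y, (f (F y) - f (Fm y)) = f 1 - f 0 := fun f => by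
    simp only [hF, hFm, sum_sub_filter_lt_telescope hr, hsum]
  have hmass : ∑ y, (F y ^ n - Fm y ^ n) = 1 := by simpa [hn0] using htelescope (· ^ n)
  have hentropy : ∑ y, (F y ^ n * log (F y) - Fm y ^ n * log (Fm y)) = 0 := by
    simpa [hn0] using htelescope fun x => x ^ n * log x
  have hpos : ∀ y, 0 < F y ^ n - Fm y ^ n := fun y => by
    have hFm0 : 0 ≤ Fm y := hFm y ▸ sum_nonneg fun z _ => (hp z).le
    have hlt : Fm y < F y := by linarith [hjump y, hp y]
    linarith [pow_lt_pow_left₀ hlt hFm0 hn0]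
  have hterm : ∀ y, (F y ^ n - Fm y ^ n) * log (n * (F y - Fm y) / (F y ^ n - Fm y ^ n)) =
      (F y ^ n - Fm y ^ n) * log n - (F y ^ n - Fm y ^ n) * log ((F y ^ n - Fm y ^ n) / p y) :=
    fun y => by
      rw [hjump, log_div (by positivity [hp y]) (hpos y).ne', log_mul (by positivity) (hp y).ne',
        log_div (hpos y).ne' (hp y).ne']
      ring
  simp only [hterm, sum_add_distrib, sum_sub_distrib, ← mul_sum, ← sum_mul, hmass, hentropy]
  ring
end

section
/- With the setup of the best-of-n policy on a finite set with injective rewards, the gap between the analytical formula and the KL divergence satisfies log(n) − (n−1)/n − KL(π⁽ⁿ⁾ ‖ p) ≤ 2n(n−1) Σ_y p(y)² = 2n(n−1) exp(−H₂(p)), where H₂(p) = −log Σ_y p(y)² is the Rényi entropy of order 2. -/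
open Finset Real

set_option maxHeartbeats 1600000

/-- Antiderivative of `n t^(n-1) * (log n + (n-1) log t)`. -/
noncomputable def Abo (n : ℕ) (t : ℝ) : ℝ :=
  t ^ n * Real.log n + ((n : ℝ) - 1) * (t ^ n * Real.log t - t ^ n / n)

lemma Abo_zero (n : ℕ) (hn : 1 ≤ n) : Abo n 0 = 0 := by
  simp [Abo, zero_pow (by omega : n ≠ 0)]

lemma Abo_one (n : ℕ) : Abo n 1 = Real.log n - ((n : ℝ) - 1) / n := by
  simp [Abo, div_eq_mul_inv]; ring

lemma xexp_le_aux (x : ℝ) : x * Real.exp (-x) ≤ 1 - Real.exp (-x) := by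
  have h1 := Real.add_one_le_exp x
  have h2 := Real.exp_pos x
  have h3 : Real.exp (-x) = (Real.exp x)⁻¹ := by rw [Real.exp_neg]
  have h4 : Real.exp x * (Real.exp x)⁻¹ = 1 := mul_inv_cancel₀ h2.ne'
  have h5 : (0:ℝ) ≤ (Real.exp x)⁻¹ := by positivity
  rw [h3]
  nlinarith [mul_le_mul_of_nonneg_right h1 h5]

lemma pow_sub_pow_le_aux (a b : ℝ) (ha : 0 ≤ a) (hab : a ≤ b) :
    ∀ m : ℕ, b ^ (m + 1) - a ^ (m + 1) ≤ (m + 1 : ℝ) * b ^ m * (b - a) := by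
  intro m
  induction m with
  | zero => simp
  | succ m ih =>
    have hb : 0 ≤ b := ha.trans hab
    have h1 : a ^ (m+1) ≤ b ^ (m+1) := pow_le_pow_left₀ ha hab (m+1)
    have h2 : 0 ≤ b ^ m := pow_nonneg hb m
    have key : b ^ (m+1+1) - a ^ (m+1+1) = b * (b ^ (m+1) - a ^ (m+1)) + a ^ (m+1) * (b - a) := by
      ring
    have h3 : b * (b ^ (m+1) - a ^ (m+1)) ≤ b * ((m + 1 : ℝ) * b ^ m * (b - a)) :=
      mul_le_mul_of_nonneg_left ih hb
    have h4 : a ^ (m+1) * (b - a) ≤ b ^ (m+1) * (b - a) :=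
      mul_le_mul_of_nonneg_right h1 (by linarith)
    have h5 : b * ((m + 1 : ℝ) * b ^ m * (b - a)) = (m + 1 : ℝ) * b ^ (m+1) * (b - a) := by
      ring
    push_cast
    nlinarith [h3, h4, h5, key]

lemma key_ineq (n : ℕ) (hn : 2 ≤ n) (a b : ℝ) (ha : 0 ≤ a) (hab : a < b) (hb1 : b ≤ 1) :
    Abo n b - Abo n a - (b ^ n - a ^ n) * Real.log ((b ^ n - a ^ n) / (b - a)) ≤
      2 * n * ((n : ℝ) - 1) * (b - a) ^ 2 := by
  have hb0 : 0 < b := lt_of_le_of_lt ha hab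
  have hp : 0 < b - a := by linarith
  have hπ : 0 < b ^ n - a ^ n :=
    sub_pos.2 (pow_lt_pow_left₀ hab ha (by omega : n ≠ 0))
  have hn1 : (1:ℝ) ≤ (n:ℝ) - 1 := by
    have : (2:ℝ) ≤ n := by exact_mod_cast hn
    linarith
  have hnpos : (0:ℝ) < n := by positivity
  -- Step 1
  have inner : b ^ n * Real.log b - a ^ n * Real.log a - (b ^ n - a ^ n) / n ≤
      (b ^ n - a ^ n) * Real.log b := by
    rcases eq_or_lt_of_le ha with h0 | ha0
    · rw [← h0]
      rw [zero_pow (by omega : n ≠ 0)]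
      have : 0 ≤ b ^ n / n := by positivity
      simp only [zero_mul, sub_zero]
      linarith
    · have hba : 0 < b / a := by positivity
      have hx : (n:ℝ) * Real.log (b / a) + 1 ≤ (b / a) ^ n := by
        have := Real.add_one_le_exp ((n:ℝ) * Real.log (b / a))
        rwa [Real.exp_nat_mul, Real.exp_log hba] at this
      have han : 0 < a ^ n := pow_pos ha0 n
      have hmul : a ^ n * ((n:ℝ) * Real.log (b / a) + 1) ≤ a ^ n * (b / a) ^ n :=
        mul_le_mul_of_nonneg_left hx han.le
      have hid : a ^ n * (b / a) ^ n = b ^ n := by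
        rw [div_pow]; field_simp
      rw [hid] at hmul
      rw [Real.log_div hb0.ne' ha0.ne'] at hmul
      have key2 : a ^ n * (Real.log b - Real.log a) ≤ (b ^ n - a ^ n) / n := by
        rw [le_div_iff₀ hnpos]; nlinarith [hmul]
      nlinarith [key2]
  have step1 : Abo n b - Abo n a ≤ (b ^ n - a ^ n) * (Real.log n + ((n:ℝ) - 1) * Real.log b) := by
    unfold Abo
    have h := mul_le_mul_of_nonneg_left inner (by linarith : (0:ℝ) ≤ (n:ℝ) - 1)
    ring_nf at h ⊢
    linarith [h]
  -- Step 2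
  set x : ℝ := (n:ℝ) * (b - a) / b with hxdef
  have hx0 : 0 ≤ x := by positivity
  have hbn1 : b ^ n = b ^ (n-1) * b := by
    rw [← pow_succ]; congr 1; omega
  have e1 : a ≤ b * Real.exp (-((b - a) / b)) := by
    have h := Real.add_one_le_exp (-((b - a) / b))
    have := mul_le_mul_of_nonneg_left h hb0.le
    have hid : b * (-((b - a) / b) + 1) = a := by field_simp; ring
    linarith [hid ▸ this]
  have e2 : a ^ n ≤ b ^ n * Real.exp (-x) := by
    have h := pow_le_pow_left₀ ha e1 n
    rw [mul_pow, ← Real.exp_nat_mul] at h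
    have hid : (n:ℝ) * -((b - a) / b) = -x := by rw [hxdef]; ring
    rwa [hid] at h
  have star : (n:ℝ) * b ^ (n-1) * (b - a) * Real.exp (-x) ≤ b ^ n - a ^ n := by
    have h3 := xexp_le_aux x
    have h4 : b ^ n * (x * Real.exp (-x)) ≤ b ^ n * (1 - Real.exp (-x)) :=
      mul_le_mul_of_nonneg_left h3 (by positivity)
    have hid : b ^ n * (x * Real.exp (-x)) = (n:ℝ) * b ^ (n-1) * (b - a) * Real.exp (-x) := by
      rw [hbn1, hxdef]; field_simp
    rw [hid] at h4
    nlinarith [e2]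
  have hL : 0 < (n:ℝ) * b ^ (n-1) * (b - a) := by positivity
  have hlogL : Real.log ((n:ℝ) * b ^ (n-1) * (b - a)) =
      Real.log n + ((n:ℝ) - 1) * Real.log b + Real.log (b - a) := by
    rw [Real.log_mul (by positivity) hp.ne', Real.log_mul (by positivity) (by positivity),
      Real.log_pow]
    have : ((n - 1 : ℕ) : ℝ) = (n:ℝ) - 1 := by
      rw [Nat.cast_sub (by omega)]; simp
    rw [this]
  have step2 : Real.log n + ((n:ℝ) - 1) * Real.log b -
      Real.log ((b ^ n - a ^ n) / (b - a)) ≤ x := by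
    have h5 : Real.log ((n:ℝ) * b ^ (n-1) * (b - a) * Real.exp (-x)) ≤
        Real.log (b ^ n - a ^ n) := Real.log_le_log (by positivity) star
    rw [Real.log_mul hL.ne' (Real.exp_pos _).ne', Real.log_exp, hlogL] at h5
    rw [Real.log_div hπ.ne' hp.ne']
    linarith
  -- combine
  have h6 : (b ^ n - a ^ n) * (Real.log n + ((n:ℝ) - 1) * Real.log b -
      Real.log ((b ^ n - a ^ n) / (b - a))) ≤ (b ^ n - a ^ n) * x :=
    mul_le_mul_of_nonneg_left step2 hπ.le
  have hchain : Abo n b - Abo n a - (b ^ n - a ^ n) * Real.log ((b ^ n - a ^ n) / (b - a)) ≤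
      (b ^ n - a ^ n) * x := by
    calc Abo n b - Abo n a - (b ^ n - a ^ n) * Real.log ((b ^ n - a ^ n) / (b - a))
        ≤ (b ^ n - a ^ n) * (Real.log n + ((n:ℝ) - 1) * Real.log b)
          - (b ^ n - a ^ n) * Real.log ((b ^ n - a ^ n) / (b - a)) := by linarith [step1]
      _ = (b ^ n - a ^ n) * (Real.log n + ((n:ℝ) - 1) * Real.log b
          - Real.log ((b ^ n - a ^ n) / (b - a))) := by ring
      _ ≤ (b ^ n - a ^ n) * x := h6
  have hπle : b ^ n - a ^ n ≤ (n:ℝ) * b ^ (n-1) * (b - a) := by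
    have h := pow_sub_pow_le_aux a b ha hab.le (n-1)
    have hn' : n - 1 + 1 = n := by omega
    rw [hn'] at h
    have : ((n - 1 : ℕ) : ℝ) + 1 = (n:ℝ) := by
      rw [Nat.cast_sub (by omega)]; ring
    rwa [this] at h
  have hlast : (b ^ n - a ^ n) * x ≤ (n:ℝ)^2 * (b - a)^2 := by
    have h7 : (b ^ n - a ^ n) * x ≤ ((n:ℝ) * b ^ (n-1) * (b - a)) * x :=
      mul_le_mul_of_nonneg_right hπle hx0
    have hbpow : b ^ (n-1) ≤ b := by
      calc b ^ (n-1) ≤ b ^ 1 := pow_le_pow_of_le_one hb0.le hb1 (by omega)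
      _ = b := pow_one b
    have hid : ((n:ℝ) * b ^ (n-1) * (b - a)) * x = (n:ℝ)^2 * (b-a)^2 * (b ^ (n-1) / b) := by
      rw [hxdef]; field_simp
    have h8 : b ^ (n-1) / b ≤ 1 := by
      rw [div_le_one hb0]; exact hbpow
    have h9 : (0:ℝ) ≤ (n:ℝ)^2 * (b-a)^2 := by positivity
    calc (b ^ n - a ^ n) * x ≤ ((n:ℝ) * b ^ (n-1) * (b - a)) * x := h7
      _ = (n:ℝ)^2 * (b-a)^2 * (b ^ (n-1) / b) := hid
      _ ≤ (n:ℝ)^2 * (b-a)^2 * 1 := mul_le_mul_of_nonneg_left h8 h9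
      _ = (n:ℝ)^2 * (b-a)^2 := by ring
  have hfin : (n:ℝ)^2 * (b - a)^2 ≤ 2 * n * ((n:ℝ) - 1) * (b - a)^2 := by
    have hsq : (0:ℝ) ≤ (b-a)^2 := sq_nonneg _
    have hcoef : (n:ℝ)^2 ≤ 2 * n * ((n:ℝ) - 1) := by nlinarith [hn1, hnpos]
    exact mul_le_mul_of_nonneg_right hcoef hsq
  linarith

lemma telescope_bon {Y : Type*} [LinearOrder Y] (p : Y → ℝ) (G : ℝ → ℝ) (S : Finset Y) :
    ∑ y ∈ S, (G (∑ z ∈ S.filter (fun z => z ≤ y), p z)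
      - G (∑ z ∈ S.filter (fun z => z < y), p z)) = G (∑ z ∈ S, p z) - G 0 := by
  classical
  induction S using Finset.induction_on_max with
  | empty => simp
  | insert a s ha ih =>
    have hans : a ∉ s := fun h => lt_irrefl a (ha a h)
    rw [Finset.sum_insert hans]
    have hfle : ∀ y ∈ s, (insert a s).filter (fun z => z ≤ y) = s.filter (fun z => z ≤ y) := by
      intro y hy
      ext z
      simp only [Finset.mem_filter, Finset.mem_insert]
      constructor
      · rintro ⟨h1 | h1, h2⟩
        · exact absurd (lt_of_le_of_lt (h1 ▸ h2) (ha y hy)) (lt_irrefl a)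
        · exact ⟨h1, h2⟩
      · rintro ⟨h1, h2⟩; exact ⟨Or.inr h1, h2⟩
    have hflt : ∀ y ∈ s, (insert a s).filter (fun z => z < y) = s.filter (fun z => z < y) := by
      intro y hy
      ext z
      simp only [Finset.mem_filter, Finset.mem_insert]
      constructor
      · rintro ⟨h1 | h1, h2⟩
        · exact absurd (lt_trans (h1 ▸ h2) (ha y hy)) (lt_irrefl a)
        · exact ⟨h1, h2⟩
      · rintro ⟨h1, h2⟩; exact ⟨Or.inr h1, h2⟩
    have hsum : ∑ y ∈ s, (G (∑ z ∈ (insert a s).filter (fun z => z ≤ y), p z)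
        - G (∑ z ∈ (insert a s).filter (fun z => z < y), p z))
        = ∑ y ∈ s, (G (∑ z ∈ s.filter (fun z => z ≤ y), p z)
        - G (∑ z ∈ s.filter (fun z => z < y), p z)) := by
      apply Finset.sum_congr rfl
      intro y hy
      rw [hfle y hy, hflt y hy]
    have hfa_le : (insert a s).filter (fun z => z ≤ a) = insert a s := by
      apply Finset.filter_true_of_mem
      intro z hz
      rcases Finset.mem_insert.1 hz with h | h
      · exact le_of_eq h
      · exact (ha z h).le
    have hfa_lt : (insert a s).filter (fun z => z < a) = s := by
      ext z
      simp only [Finset.mem_filter, Finset.mem_insert]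
      constructor
      · rintro ⟨h1 | h1, h2⟩
        · exact absurd (h1 ▸ h2) (lt_irrefl a)
        · exact h1
      · intro h; exact ⟨Or.inr h, ha z h⟩
    rw [hsum, ih, hfa_le, hfa_lt]
    ring

theorem stmt_11
    {Y : Type*} [Fintype Y]
    (p : Y → ℝ) (r : Y → ℝ)
    (hp : ∀ y, 0 < p y) (hsum : ∑ y, p y = 1)
    (hr : Function.Injective r)
    (n : ℕ) (hn : 1 ≤ n)
    (F Fm : Y → ℝ)
    (hF : ∀ y, F y = ∑ z ∈ Finset.univ.filter (fun z => r z ≤ r y), p z)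
    (hFm : ∀ y, Fm y = ∑ z ∈ Finset.univ.filter (fun z => r z < r y), p z) :
    (Real.log n - ((n : ℝ) - 1) / n) -
        ∑ y : Y, (F y ^ n - Fm y ^ n) * Real.log ((F y ^ n - Fm y ^ n) / p y) ≤
      2 * n * ((n : ℝ) - 1) * ∑ y : Y, p y ^ 2 ∧
    ∑ y : Y, p y ^ 2 = Real.exp (-(-Real.log (∑ y : Y, p y ^ 2))) := by
  classical
  have hYne : (Finset.univ : Finset Y).Nonempty := by
    by_contra h
    rw [Finset.not_nonempty_iff_eq_empty] at h
    rw [h, Finset.sum_empty] at hsum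
    exact one_ne_zero hsum.symm
  have hS2 : 0 < ∑ y : Y, p y ^ 2 :=
    Finset.sum_pos (fun y _ => pow_pos (hp y) 2) hYne
  have hstep : ∀ y, F y = Fm y + p y := by
    intro y
    rw [hF y, hFm y]
    have hins : Finset.univ.filter (fun z => r z ≤ r y)
        = insert y (Finset.univ.filter (fun z => r z < r y)) := by
      ext z
      simp only [Finset.mem_filter, Finset.mem_insert, Finset.mem_univ, true_and]
      constructor
      · intro h
        rcases eq_or_lt_of_le h with h1 | h1
        · left; exact hr h1
        · right; exact h1
      · rintro (rfl | h1)
        · exact le_refl _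
        · exact h1.le
    rw [hins, Finset.sum_insert (by simp)]
    ring
  have hFm0 : ∀ y, 0 ≤ Fm y := fun y => by
    rw [hFm y]; exact Finset.sum_nonneg fun z _ => (hp z).le
  have hF1 : ∀ y, F y ≤ 1 := fun y => by
    rw [hF y, ← hsum]
    exact Finset.sum_le_sum_of_subset_of_nonneg (Finset.filter_subset _ _)
      (fun z _ _ => (hp z).le)
  constructor
  · rcases eq_or_lt_of_le hn with h1 | h2
    · -- n = 1
      have hne : n = 1 := h1.symm
      subst hne
      have hterm : ∀ y : Y, (F y ^ 1 - Fm y ^ 1) * Real.log ((F y ^ 1 - Fm y ^ 1) / p y) = 0 := by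
        intro y
        have : F y ^ 1 - Fm y ^ 1 = p y := by
          rw [pow_one, pow_one]; linarith [hstep y]
        rw [this, div_self (hp y).ne', Real.log_one, mul_zero]
      rw [Finset.sum_congr rfl (fun y _ => hterm y)]
      simp
    · -- n ≥ 2
      have hn2 : 2 ≤ n := h2
      letI : LinearOrder Y := LinearOrder.lift' r hr
      have hfilt1 : ∀ y : Y, (Finset.univ.filter (fun z : Y => z ≤ y))
          = (Finset.univ.filter (fun z => r z ≤ r y)) := by
        intro y; ext z
        simp only [Finset.mem_filter, Finset.mem_univ, true_and]
        exact Iff.rfl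
      have hfilt2 : ∀ y : Y, (Finset.univ.filter (fun z : Y => z < y))
          = (Finset.univ.filter (fun z => r z < r y)) := by
        intro y; ext z
        simp only [Finset.mem_filter, Finset.mem_univ, true_and]
        exact Iff.rfl
      have htel := telescope_bon p (Abo n) (Finset.univ : Finset Y)
      have htel' : ∑ y : Y, (Abo n (F y) - Abo n (Fm y)) = Abo n 1 - Abo n 0 := by
        calc ∑ y : Y, (Abo n (F y) - Abo n (Fm y))
            = ∑ y : Y, (Abo n (∑ z ∈ Finset.univ.filter (fun z : Y => z ≤ y), p z)
              - Abo n (∑ z ∈ Finset.univ.filter (fun z : Y => z < y), p z)) := by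
              apply Finset.sum_congr rfl
              intro y _
              rw [hF y, hFm y, ← hfilt1 y, ← hfilt2 y]
          _ = Abo n (∑ z : Y, p z) - Abo n 0 := htel
          _ = Abo n 1 - Abo n 0 := by rw [hsum]
      have hkey : Real.log n - ((n:ℝ) - 1) / n = ∑ y : Y, (Abo n (F y) - Abo n (Fm y)) := by
        rw [htel', Abo_zero n hn, Abo_one n]
        ring
      rw [hkey, ← Finset.sum_sub_distrib, Finset.mul_sum]
      apply Finset.sum_le_sum
      intro y _
      have hab : Fm y < F y := by linarith [hstep y, hp y]
      have hky := key_ineq n hn2 (Fm y) (F y) (hFm0 y) hab (hF1 y)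
      have hpy : F y - Fm y = p y := by linarith [hstep y]
      rw [hpy] at hky
      exact hky
  · rw [neg_neg, Real.exp_log hS2]
end

section
/- Let ε∞ = p(y_max) where y_max is the unique highest-reward outcome. Then for every n ≥ 1, the gap satisfies log(n) − (n−1)/n − KL(π⁽ⁿ⁾ ‖ p) ≥ (1 − (1−ε∞)ⁿ) (log(nε∞/(1 − (1−ε∞)ⁿ)) − (n−1)/n) − (n−1)(1−ε∞)ⁿ log(1−ε∞), and this lower bound is nonnegative. -/
open Finset Real

noncomputable def Gf (n : ℕ) (w : ℝ) : ℝ :=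
  w ^ n * Real.log n + ((n : ℝ) - 1) * (w ^ n * Real.log w) - ((n : ℝ) - 1) / n * w ^ n

noncomputable def Ef (n : ℕ) (a x : ℝ) : ℝ :=
  Gf n x - ((x ^ n - a ^ n) * Real.log (x ^ n - a ^ n)
    - (∑ i ∈ Finset.range n, x ^ i * a ^ (n - 1 - i)) * ((x - a) * Real.log (x - a)))

noncomputable def Df (n : ℕ) (a x : ℝ) : ℝ :=
  (x ^ n * Real.log n + ((n : ℝ) - 1) * (x ^ n * Real.log x) - ((n : ℝ) - 1) / n * x ^ n)
    - (x ^ n - a ^ n) * (Real.log (x ^ n - a ^ n) - Real.log (x - a))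

lemma Ef_cont (n : ℕ) (hn : 1 ≤ n) (a : ℝ) : Continuous (Ef n a) := by
  have hml : Continuous fun x : ℝ => x * Real.log x := Real.continuous_mul_log
  have h1 : (fun x : ℝ => x ^ n * Real.log x) = fun x => x ^ (n - 1) * (x * Real.log x) := by
    funext x
    rw [← mul_assoc, ← pow_succ, Nat.sub_add_cancel hn]
  have hGf : Continuous (Gf n) := by
    unfold Gf
    apply Continuous.sub
    · exact ((continuous_pow n).mul continuous_const).add
        (continuous_const.mul (h1 ▸ ((continuous_pow (n-1)).mul hml)))
    · exact continuous_const.mul (continuous_pow n)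
  unfold Ef
  apply hGf.sub
  apply Continuous.sub
  · exact hml.comp ((continuous_pow n).sub continuous_const)
  · apply Continuous.mul
    · exact continuous_finset_sum _ fun i _ => (continuous_pow i).mul continuous_const
    · exact hml.comp (continuous_id.sub continuous_const)


lemma ulogineq (u v : ℝ) (hu : 0 < u) (hv : 0 < v) :
    0 ≤ u * (Real.log u - Real.log v) + (v - u) := by
  have hlog := Real.log_le_sub_one_of_pos (div_pos hv hu)
  rw [Real.log_div hv.ne' hu.ne'] at hlog
  have h2 := mul_le_mul_of_nonneg_left hlog hu.le
  have h3 : u * (v / u - 1) = v - u := by field_simp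
  rw [h3, mul_sub] at h2
  rw [mul_sub]
  linarith

lemma key (n : ℕ) (hn : 1 ≤ n) (a b : ℝ) (ha : 0 ≤ a) (hab : a < b) :
    (b ^ n - a ^ n) * Real.log ((b ^ n - a ^ n) / (b - a)) ≤ Gf n b - Gf n a := by
  -- derivative facts at interior points
  have hderiv : ∀ x ∈ Set.Ioo a b, ∃ d, HasDerivAt (Ef n a) d x ∧ 0 ≤ d := by
    intro x hx
    have hax : a < x := hx.1
    have hx0 : 0 < x := lt_of_le_of_lt ha hax
    have hxa0 : (0:ℝ) < x - a := by linarith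
    have hP0 : 0 < x ^ n - a ^ n := by
      have := pow_lt_pow_left₀ hax ha (Nat.one_le_iff_ne_zero.mp hn)
      linarith
    -- HasDerivAt pieces for Df
    have t1 : HasDerivAt (fun w : ℝ => w ^ n * Real.log n) ((n : ℝ) * x ^ (n - 1) * Real.log n) x :=
      (hasDerivAt_pow n x).mul_const _
    have t2 : HasDerivAt (fun w : ℝ => ((n : ℝ) - 1) * (w ^ n * Real.log w))
        (((n : ℝ) - 1) * ((n : ℝ) * x ^ (n - 1) * Real.log x + x ^ n * x⁻¹)) x :=
      ((hasDerivAt_pow n x).mul (Real.hasDerivAt_log hx0.ne')).const_mul _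
    have t3 : HasDerivAt (fun w : ℝ => ((n : ℝ) - 1) / n * w ^ n)
        (((n : ℝ) - 1) / n * ((n : ℝ) * x ^ (n - 1))) x :=
      ((hasDerivAt_pow n x).const_mul _)
    have tP : HasDerivAt (fun w : ℝ => w ^ n - a ^ n) ((n : ℝ) * x ^ (n - 1)) x :=
      (hasDerivAt_pow n x).sub_const _
    have tlogP : HasDerivAt (fun w : ℝ => Real.log (w ^ n - a ^ n))
        (((n : ℝ) * x ^ (n - 1)) / (x ^ n - a ^ n)) x := tP.log hP0.ne'
    have tlogxa : HasDerivAt (fun w : ℝ => Real.log (w - a)) (1 / (x - a)) x := by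
      simpa using ((hasDerivAt_id x).sub_const a).log hxa0.ne'
    have tQ := tP.mul (tlogP.sub tlogxa)
    have hDf : HasDerivAt (Df n a)
        (((n : ℝ) * x ^ (n - 1) * Real.log n
          + ((n : ℝ) - 1) * ((n : ℝ) * x ^ (n - 1) * Real.log x + x ^ n * x⁻¹)
          - ((n : ℝ) - 1) / n * ((n : ℝ) * x ^ (n - 1)))
          - ((n : ℝ) * x ^ (n - 1) * (Real.log (x ^ n - a ^ n) - Real.log (x - a))
            + (x ^ n - a ^ n) * (((n : ℝ) * x ^ (n - 1)) / (x ^ n - a ^ n) - 1 / (x - a)))) x :=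
      ((t1.add t2).sub t3).sub tQ
    -- Ef = Df near x
    have heq : Ef n a =ᶠ[nhds x] Df n a := by
      have hopen : IsOpen {w : ℝ | a < w} := isOpen_lt continuous_const continuous_id
      filter_upwards [hopen.mem_nhds hax] with w hw
      have hwP : (0:ℝ) < w ^ n - a ^ n := by
        have := pow_lt_pow_left₀ hw ha (Nat.one_le_iff_ne_zero.mp hn)
        linarith
      have hgeom : (∑ i ∈ Finset.range n, w ^ i * a ^ (n - 1 - i)) * (w - a) = w ^ n - a ^ n :=
        geom_sum₂_mul w a n
      unfold Ef Df Gf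
      have : (∑ i ∈ Finset.range n, w ^ i * a ^ (n - 1 - i)) * ((w - a) * Real.log (w - a))
          = (w ^ n - a ^ n) * Real.log (w - a) := by
        rw [← mul_assoc, hgeom]
      rw [this]
      ring
    have hEf := hDf.congr_of_eventuallyEq heq
    refine ⟨_, hEf, ?_⟩
    -- positivity of derivative
    have hxx : x ^ n * x⁻¹ = x ^ (n - 1) := by
      have hxn : x ^ n = x ^ (n - 1) * x := by rw [← pow_succ, Nat.sub_add_cancel hn]
      rw [hxn, mul_assoc, mul_inv_cancel₀ hx0.ne', mul_one]
    have hn0 : (0:ℝ) < (n : ℝ) := by exact_mod_cast hn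
    have hc1 : ((n : ℝ) - 1) / n * ((n : ℝ) * x ^ (n - 1)) = ((n : ℝ) - 1) * x ^ (n - 1) := by
      field_simp
    have hc2 : (x ^ n - a ^ n) * (((n : ℝ) * x ^ (n - 1)) / (x ^ n - a ^ n) - 1 / (x - a))
        = (n : ℝ) * x ^ (n - 1) - (x ^ n - a ^ n) / (x - a) := by
      rw [mul_sub, mul_div_cancel₀ _ hP0.ne', mul_one_div]
    rw [hxx, hc1, hc2]
    have hu0 : (0:ℝ) < (n : ℝ) * x ^ (n - 1) := by positivity
    have hv0 : (0:ℝ) < (x ^ n - a ^ n) / (x - a) := div_pos hP0 hxa0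
    have hlogu : Real.log ((n : ℝ) * x ^ (n - 1)) = Real.log n + ((n : ℝ) - 1) * Real.log x := by
      rw [Real.log_mul hn0.ne' (by positivity), Real.log_pow, Nat.cast_sub hn]
      norm_num
    have hmain := ulogineq ((n : ℝ) * x ^ (n - 1)) ((x ^ n - a ^ n) / (x - a)) hu0 hv0
    rw [hlogu, Real.log_div hP0.ne' hxa0.ne'] at hmain
    nlinarith [hmain]
  -- monotonicity
  have hmono : MonotoneOn (Ef n a) (Set.Icc a b) := by
    apply monotoneOn_of_deriv_nonneg (convex_Icc a b) (Ef_cont n hn a).continuousOn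
    · intro x hx
      rw [interior_Icc] at hx
      obtain ⟨d, hd, _⟩ := hderiv x hx
      exact hd.differentiableAt.differentiableWithinAt
    · intro x hx
      rw [interior_Icc] at hx
      obtain ⟨d, hd, hd0⟩ := hderiv x hx
      rw [hd.deriv]; exact hd0
  have hle := hmono (Set.left_mem_Icc.mpr hab.le) (Set.right_mem_Icc.mpr hab.le) hab.le
  have hEa : Ef n a a = Gf n a := by
    unfold Ef
    simp
  have hEb : Ef n a b = Gf n b - (b ^ n - a ^ n) * Real.log ((b ^ n - a ^ n) / (b - a)) := by
    have hbP : (0:ℝ) < b ^ n - a ^ n := by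
      have := pow_lt_pow_left₀ hab ha (Nat.one_le_iff_ne_zero.mp hn)
      linarith
    have hba : (0:ℝ) < b - a := by linarith
    have hgeom : (∑ i ∈ Finset.range n, b ^ i * a ^ (n - 1 - i)) * (b - a) = b ^ n - a ^ n :=
      geom_sum₂_mul b a n
    unfold Ef
    rw [Real.log_div hbP.ne' hba.ne']
    have : (∑ i ∈ Finset.range n, b ^ i * a ^ (n - 1 - i)) * ((b - a) * Real.log (b - a))
        = (b ^ n - a ^ n) * Real.log (b - a) := by rw [← mul_assoc, hgeom]
    rw [this]
    ring
  rw [hEa, hEb] at hle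
  linarith


lemma tel {Y : Type*} [Fintype Y] (p r : Y → ℝ) (hr : Function.Injective r)
    (F Fm : Y → ℝ)
    (hF : ∀ y, F y = ∑ z ∈ Finset.univ.filter (fun z => r z ≤ r y), p z)
    (hFm : ∀ y, Fm y = ∑ z ∈ Finset.univ.filter (fun z => r z < r y), p z)
    (G : ℝ → ℝ) (hG0 : G 0 = 0)
    (s : Finset Y) (hdown : ∀ y ∈ s, ∀ z, r z < r y → z ∈ s) :
    ∑ y ∈ s, (G (F y) - G (Fm y)) = G (∑ z ∈ s, p z) := by
  classical
  revert hdown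
  induction s using Finset.strongInduction with
  | _ s ih =>
    intro hdown
    rcases s.eq_empty_or_nonempty with rfl | hne
    · simpa using hG0.symm
    · obtain ⟨y1, hy1s, hy1max⟩ := s.exists_max_image r hne
      have hsub : s.erase y1 ⊂ s := Finset.erase_ssubset hy1s
      have herase_eq : s.erase y1 = Finset.univ.filter (fun z => r z < r y1) := by
        ext z
        simp only [Finset.mem_erase, Finset.mem_filter, Finset.mem_univ, true_and]
        constructor
        · rintro ⟨hzz, hzs⟩
          exact lt_of_le_of_ne (hy1max z hzs) (fun h => hzz (hr h))
        · intro hlt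
          exact ⟨fun h => absurd hlt (by rw [h]; exact lt_irrefl _), hdown y1 hy1s z hlt⟩
      have hdown' : ∀ y ∈ s.erase y1, ∀ z, r z < r y → z ∈ s.erase y1 := by
        intro y hy z hz
        rw [herase_eq]
        simp only [Finset.mem_filter, Finset.mem_univ, true_and]
        exact lt_of_lt_of_le hz (hy1max y (Finset.mem_of_mem_erase hy))
      have hrec := ih (s.erase y1) hsub hdown'
      have hsum_erase : ∑ z ∈ s.erase y1, p z = Fm y1 := by rw [hFm, herase_eq]
      have hsum_s : ∑ z ∈ s, p z = F y1 := by
        rw [hF]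
        congr 1
        ext z
        simp only [Finset.mem_filter, Finset.mem_univ, true_and]
        constructor
        · intro hzs; exact hy1max z hzs
        · intro hle
          rcases hle.lt_or_eq with hlt | heq
          · exact hdown y1 hy1s z hlt
          · rw [hr heq]; exact hy1s
      rw [← Finset.sum_erase_add s _ hy1s, hrec, hsum_erase, hsum_s]
      ring

theorem stmt_13
    {Y : Type*} [Fintype Y]
    (p : Y → ℝ) (r : Y → ℝ)
    (hp : ∀ y, 0 < p y) (hsum : ∑ y, p y = 1)
    (hr : Function.Injective r)
    (ymax : Y) (hymax : ∀ y, r y ≤ r ymax)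
    (ε : ℝ) (hε : ε = p ymax)
    (n : ℕ) (hn : 1 ≤ n)
    (F Fm : Y → ℝ)
    (hF : ∀ y, F y = ∑ z ∈ Finset.univ.filter (fun z => r z ≤ r y), p z)
    (hFm : ∀ y, Fm y = ∑ z ∈ Finset.univ.filter (fun z => r z < r y), p z) :
    (Real.log n - ((n : ℝ) - 1) / n) -
        ∑ y : Y, (F y ^ n - Fm y ^ n) * Real.log ((F y ^ n - Fm y ^ n) / p y) ≥
      (1 - (1 - ε) ^ n) *
          (Real.log ((n : ℝ) * ε / (1 - (1 - ε) ^ n)) - ((n : ℝ) - 1) / n) -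
        ((n : ℝ) - 1) * (1 - ε) ^ n * Real.log (1 - ε) ∧
    (1 - (1 - ε) ^ n) *
        (Real.log ((n : ℝ) * ε / (1 - (1 - ε) ^ n)) - ((n : ℝ) - 1) / n) -
      ((n : ℝ) - 1) * (1 - ε) ^ n * Real.log (1 - ε) ≥ 0 := by
  classical
  have hn' : n ≠ 0 := Nat.one_le_iff_ne_zero.mp hn
  have hnR : (0:ℝ) < (n : ℝ) := by exact_mod_cast hn
  set q : ℝ := Fm ymax with hq
  have hFy : ∀ y, F y = Fm y + p y := by
    intro y
    rw [hF, hFm]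
    have hins : Finset.univ.filter (fun z => r z ≤ r y)
        = insert y (Finset.univ.filter (fun z => r z < r y)) := by
      ext z
      simp only [Finset.mem_filter, Finset.mem_univ, true_and, Finset.mem_insert]
      constructor
      · intro hle
        rcases hle.lt_or_eq with hlt | heq
        · exact Or.inr hlt
        · exact Or.inl (hr heq)
      · rintro (rfl | hlt)
        · exact le_refl _
        · exact hlt.le
    rw [hins, Finset.sum_insert (by simp)]
    ring
  have hFm_nonneg : ∀ y, 0 ≤ Fm y := fun y => by
    rw [hFm]; exact Finset.sum_nonneg fun z _ => (hp z).le
  have hFymax : F ymax = 1 := by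
    rw [hF, ← hsum]
    congr 1
    exact Finset.filter_true_of_mem fun z _ => hymax z
  have hεpos : 0 < ε := hε ▸ hp ymax
  have hq1 : q + ε = 1 := by
    have h1 := hFy ymax
    rw [hFymax] at h1
    rw [hq, hε]; linarith
  have hq0 : 0 ≤ q := hFm_nonneg ymax
  have hqlt1 : q < 1 := by linarith
  have hεq : 1 - ε = q := by linarith
  have hA0 : 0 < 1 - q ^ n := by
    have : q ^ n < 1 := pow_lt_one₀ hq0 hqlt1 hn'
    linarith
  have hGf1 : Gf n 1 = Real.log n - ((n : ℝ) - 1) / n := by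
    unfold Gf; simp
  have hGf0 : Gf n 0 = 0 := by
    unfold Gf; rw [zero_pow hn']; simp
  -- key lemma on [q, 1]
  have hkey1 := key n hn q 1 hq0 hqlt1
  rw [one_pow, show (1:ℝ) - q = ε by linarith] at hkey1
  -- identify the goal RHS
  rw [hεq]
  have hRid : (1 - q ^ n) * (Real.log ((n : ℝ) * ε / (1 - q ^ n)) - ((n : ℝ) - 1) / n) -
      ((n : ℝ) - 1) * q ^ n * Real.log q
      = (Gf n 1 - Gf n q) - (1 - q ^ n) * Real.log ((1 - q ^ n) / ε) := by
    rw [hGf1]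
    unfold Gf
    rw [Real.log_div (mul_ne_zero hnR.ne' hεpos.ne') hA0.ne',
      Real.log_mul hnR.ne' hεpos.ne', Real.log_div hA0.ne' hεpos.ne']
    ring
  -- per-outcome bound and telescoping over y ≠ ymax
  have hdown : ∀ y ∈ Finset.univ.erase ymax, ∀ z, r z < r y → z ∈ Finset.univ.erase ymax := by
    intro y hy z hz
    simp only [Finset.mem_erase, Finset.mem_univ, and_true]
    intro hzy
    subst hzy
    exact absurd (lt_of_lt_of_le hz (hymax y)) (lt_irrefl _)
  have htel := tel p r hr F Fm hF hFm (Gf n) hGf0 (Finset.univ.erase ymax) hdown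
  have herase_p : ∑ z ∈ Finset.univ.erase ymax, p z = q := by
    rw [hq, hFm]
    congr 1
    ext z
    simp only [Finset.mem_erase, Finset.mem_univ, and_true, Finset.mem_filter, true_and]
    constructor
    · intro hzz
      exact lt_of_le_of_ne (hymax z) (fun h => hzz (hr h))
    · intro hlt h
      subst h
      exact absurd hlt (lt_irrefl _)
  rw [herase_p] at htel
  have hbound : ∑ y ∈ Finset.univ.erase ymax,
      (F y ^ n - Fm y ^ n) * Real.log ((F y ^ n - Fm y ^ n) / p y)
      ≤ ∑ y ∈ Finset.univ.erase ymax, (Gf n (F y) - Gf n (Fm y)) := by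
    apply Finset.sum_le_sum
    intro y _
    have h1 : Fm y < F y := by
      rw [hFy y]; linarith [hp y]
    have h2 := key n hn (Fm y) (F y) (hFm_nonneg y) h1
    have h3 : F y - Fm y = p y := by rw [hFy y]; ring
    rw [h3] at h2
    exact h2
  have hsplit := Finset.sum_erase_add Finset.univ
    (fun y => (F y ^ n - Fm y ^ n) * Real.log ((F y ^ n - Fm y ^ n) / p y))
    (Finset.mem_univ ymax)
  have htop : (F ymax ^ n - Fm ymax ^ n) * Real.log ((F ymax ^ n - Fm ymax ^ n) / p ymax)
      = (1 - q ^ n) * Real.log ((1 - q ^ n) / ε) := by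
    rw [hFymax, one_pow, ← hq, ← hε]
  beta_reduce at hsplit
  rw [htop] at hsplit
  constructor
  · rw [ge_iff_le, ← hGf1]
    have : ∑ y : Y, (F y ^ n - Fm y ^ n) * Real.log ((F y ^ n - Fm y ^ n) / p y)
        ≤ Gf n q + (1 - q ^ n) * Real.log ((1 - q ^ n) / ε) := by
      rw [← hsplit]
      linarith [le_trans hbound (le_of_eq htel)]
    linarith [hRid]
  · rw [ge_iff_le, hRid]
    linarith [hkey1]
end

section
/- For ε ∈ (0,1) and n ≥ 1, the quantity g_n(1−ε, 1) = (1 − (1−ε)ⁿ) log(nε/(1 − (1−ε)ⁿ)) − (n−1)(1−ε)ⁿ log(1−ε) − ((n−1)/n)(1 − (1−ε)ⁿ) satisfies g_n(1−ε, 1) ≥ (1 − e^{−nε}) log(nε) − 1. -/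
/-!
Write `b = (1 - ε)ⁿ`. The middle term `-(n - 1) b log (1 - ε)` is nonnegative and the last one is at
most `1`, so it suffices that `(1 - e^{-nε}) log (nε) ≤ (1 - b) log (nε / (1 - b))`. This holds because
`1 - e^{-nε} ≤ 1 - b ≤ min 1 (nε)`: for `nε ≥ 1` drop the term `-(1 - b) log (1 - b) ≥ 0`, and for
`nε < 1` the left side is `≤ 0` while the right side is `≥ 0`.
-/

open Real

lemma pow_one_sub_le_exp_neg_mul {ε : ℝ} (hε : ε ≤ 1) (n : ℕ) :
    (1 - ε) ^ n ≤ exp (-n * ε) :=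
  calc (1 - ε) ^ n ≤ exp (-ε) ^ n := pow_le_pow_left₀ (by linarith) (one_sub_le_exp_neg ε) n
    _ = exp (-n * ε) := by rw [← exp_nat_mul, neg_mul, mul_neg]

lemma one_sub_mul_le_pow_one_sub {ε : ℝ} (hε : ε ≤ 1) (n : ℕ) : 1 - n * ε ≤ (1 - ε) ^ n := by
  simpa [sub_eq_add_neg] using one_add_mul_sub_le_pow (a := 1 - ε) (by linarith) n

lemma mul_log_le_mul_log_div {x a c : ℝ} (hx : 0 < x) (ha : 0 < a) (hca : c ≤ a) (hc : 0 ≤ c)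
    (ha1 : a ≤ 1) (hax : a ≤ x) : c * log x ≤ a * log (x / a) := by
  rcases le_or_gt 1 x with hx1 | hx1
  · have hlog : log x ≤ log (x / a) := log_le_log hx (le_div_self hx.le ha ha1)
    calc c * log x ≤ a * log x := mul_le_mul_of_nonneg_right hca (log_nonneg hx1)
      _ ≤ a * log (x / a) := mul_le_mul_of_nonneg_left hlog ha.le
  · have hxa : 1 ≤ x / a := (one_le_div ha).mpr hax
    calc c * log x ≤ 0 := mul_nonpos_of_nonneg_of_nonpos hc (log_nonpos hx.le hx1.le)
      _ ≤ a * log (x / a) := mul_nonneg ha.le (log_nonneg hxa)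

theorem stmt_14 (n : ℕ) (hn : 1 ≤ n) (ε : ℝ) (hε0 : 0 < ε) (hε1 : ε < 1) :
    (1 - (1 - ε) ^ n) * Real.log ((n : ℝ) * ε / (1 - (1 - ε) ^ n)) -
        ((n : ℝ) - 1) * (1 - ε) ^ n * Real.log (1 - ε) -
        (((n : ℝ) - 1) / n) * (1 - (1 - ε) ^ n) ≥
      (1 - Real.exp (-(n : ℝ) * ε)) * Real.log ((n : ℝ) * ε) - 1 := by
  have hn1 : (1 : ℝ) ≤ n := by exact_mod_cast hn
  have hb0 : 0 < (1 - ε) ^ n := pow_pos (by linarith) n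
  have hb1 : (1 - ε) ^ n < 1 := pow_lt_one₀ (by linarith) (by linarith) (by omega)
  have hexp : exp (-n * ε) ≤ 1 := exp_le_one_iff.mpr (by nlinarith)
  have hmiddle : ((n : ℝ) - 1) * (1 - ε) ^ n * log (1 - ε) ≤ 0 :=
    mul_nonpos_of_nonneg_of_nonpos (mul_nonneg (sub_nonneg.mpr hn1) hb0.le)
      (log_nonpos (by linarith) (by linarith))
  have hlast : ((n : ℝ) - 1) / n * (1 - (1 - ε) ^ n) ≤ 1 :=
    mul_le_one₀ (div_le_one_of_le₀ (by linarith) (by linarith)) (by linarith) (by linarith)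
  have hmain : (1 - exp (-n * ε)) * log (n * ε) ≤
      (1 - (1 - ε) ^ n) * log (n * ε / (1 - (1 - ε) ^ n)) :=
    mul_log_le_mul_log_div (by positivity) (sub_pos.mpr hb1)
      (by linarith [pow_one_sub_le_exp_neg_mul hε1.le n]) (by linarith) (by linarith)
      (by linarith [one_sub_mul_le_pow_one_sub hε1.le n])
  linarith
end

section
/- With ε∞ = p(y_max) the base probability of the highest-reward outcome, if nε∞ ≫ 1 then the gap grows unboundedly: precisely, for any fixed ε∞ ∈ (0,1), log(n) − (n−1)/n − KL(π⁽ⁿ⁾ ‖ p) ≥ (1 − e^{−nε∞}) log(nε∞) − 1 → ∞ as n → ∞. -/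
open Finset Real Filter Topology

lemma aux_pow_sub_pow {a b : ℝ} (hb : 0 ≤ b) (hba : b ≤ a) (n : ℕ) :
    a ^ (n+1) - b ^ (n+1) ≤ ((n:ℝ)+1) * (a - b) * a ^ n := by
  induction n with
  | zero => simp
  | succ n ih =>
    have ha : 0 ≤ a := hb.trans hba
    have hbn : b ^ (n+1) ≤ a ^ (n+1) := pow_le_pow_left₀ hb hba _
    have h1 : a * (a^(n+1) - b^(n+1)) ≤ a * (((n:ℝ)+1) * (a-b) * a^n) :=
      mul_le_mul_of_nonneg_left ih ha
    have h2 : (a-b) * b^(n+1) ≤ (a-b) * a^(n+1) :=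
      mul_le_mul_of_nonneg_left hbn (by linarith)
    have h3 : a * (((n:ℝ)+1) * (a-b) * a^n) = ((n:ℝ)+1) * (a-b) * a^(n+1) := by ring
    have h4 : a^(n+1+1) - b^(n+1+1) = a*(a^(n+1)-b^(n+1)) + (a-b)*b^(n+1) := by ring
    push_cast
    linarith [h1, h2, h3, h4]

lemma sum_pi_eq_one {Y : Type*} [Fintype Y] (p r : Y → ℝ) (hr : Function.Injective r)
    (hsum : ∑ y, p y = 1) {n : ℕ} (hn : 1 ≤ n) :
    ∑ y, ((∑ z ∈ univ.filter (fun z => r z ≤ r y), p z) ^ n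
        - (∑ z ∈ univ.filter (fun z => r z < r y), p z) ^ n) = 1 := by
  classical
  letI : LinearOrder Y := LinearOrder.lift' r hr
  have hle : ∀ a b : Y, a ≤ b ↔ r a ≤ r b := fun _ _ => Iff.rfl
  have hlt : ∀ a b : Y, a < b ↔ r a < r b := fun _ _ => Iff.rfl
  have hne : Nonempty Y := by
    by_contra h
    rw [not_nonempty_iff] at h
    rw [Finset.univ_eq_empty, Finset.sum_empty] at hsum
    norm_num at hsum
  set m := Fintype.card Y with hm
  have hm0 : 0 < m := Fintype.card_pos
  let e := monoEquivOfFin Y rfl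
  have keyle : ∀ (z : Y) (j : Fin m), z ≤ e j ↔ (e.symm z : ℕ) ≤ (j : ℕ) := by
    intro z j
    rw [← e.symm.le_iff_le, OrderIso.symm_apply_apply, Fin.le_def]
  have keylt : ∀ (z : Y) (j : Fin m), z < e j ↔ (e.symm z : ℕ) < (j : ℕ) := by
    intro z j
    rw [← e.symm.lt_iff_lt, OrderIso.symm_apply_apply, Fin.lt_def]
  set b : ℕ → ℝ := fun i => if h : i < m then
      (∑ z ∈ univ.filter (fun z => r z < r (e ⟨i, h⟩)), p z)^n else 1 with hbdef
  have hbp : ∀ (i : ℕ) (h : i < m),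
      b i = (∑ z ∈ univ.filter (fun z => r z < r (e ⟨i, h⟩)), p z)^n := fun i h => dif_pos h
  have hbn : ∀ (i : ℕ), ¬ i < m → b i = 1 := fun i h => dif_neg h
  have hFmb : ∀ i : Fin m, (∑ z ∈ univ.filter (fun z => r z < r (e i)), p z)^n = b i := by
    intro i
    rw [hbp i i.isLt]
  have hFb : ∀ i : Fin m, (∑ z ∈ univ.filter (fun z => r z ≤ r (e i)), p z)^n = b ((i:ℕ)+1) := by
    intro i
    by_cases h : (i:ℕ)+1 < m
    · rw [hbp _ h]
      congr 2
      apply Finset.filter_congr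
      intro z _
      rw [← hle, ← hlt, keyle, keylt]
      simp only [Fin.val_mk]
      omega
    · rw [hbn _ h]
      have huniv : univ.filter (fun z => r z ≤ r (e i)) = univ := by
        apply Finset.filter_true_of_mem
        intro z _
        rw [← hle, keyle]
        have h1 : (e.symm z : ℕ) < m := (e.symm z).isLt
        omega
      rw [huniv, hsum, one_pow]
  have hb0 : b 0 = 0 := by
    rw [hbp 0 hm0]
    have hempty : univ.filter (fun z => r z < r (e ⟨0, hm0⟩)) = ∅ := by
      apply Finset.filter_false_of_mem
      intro z _
      rw [← hlt, keylt]
      simp only [Fin.val_mk]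
      omega
    rw [hempty, Finset.sum_empty, zero_pow (by omega)]
  have hbm : b m = 1 := hbn m (lt_irrefl m)
  calc ∑ y, ((∑ z ∈ univ.filter (fun z => r z ≤ r y), p z) ^ n
        - (∑ z ∈ univ.filter (fun z => r z < r y), p z) ^ n)
      = ∑ i : Fin m, ((∑ z ∈ univ.filter (fun z => r z ≤ r (e i)), p z) ^ n
        - (∑ z ∈ univ.filter (fun z => r z < r (e i)), p z) ^ n) :=
        (Equiv.sum_comp e.toEquiv _).symm
    _ = ∑ i : Fin m, (b ((i:ℕ)+1) - b (i:ℕ)) := by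
        apply Finset.sum_congr rfl
        intro i _
        rw [hFb i, hFmb i]
    _ = ∑ i ∈ Finset.range m, (b (i+1) - b i) :=
        Fin.sum_univ_eq_sum_range (fun k => b (k+1) - b k) m
    _ = b m - b 0 := Finset.sum_range_sub b m
    _ = 1 := by rw [hbm, hb0]; ring


set_option maxHeartbeats 2000000 in
theorem stmt_15
    {Y : Type*} [Fintype Y]
    (p : Y → ℝ) (r : Y → ℝ)
    (hp : ∀ y, 0 < p y) (hsum : ∑ y, p y = 1)
    (hr : Function.Injective r)
    (ymax : Y) (hymax : ∀ y, r y ≤ r ymax)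
    (ε : ℝ) (hε : ε = p ymax) (hε1 : ε < 1)
    (F Fm : Y → ℝ)
    (hF : ∀ y, F y = ∑ z ∈ Finset.univ.filter (fun z => r z ≤ r y), p z)
    (hFm : ∀ y, Fm y = ∑ z ∈ Finset.univ.filter (fun z => r z < r y), p z) :
    (∀ n : ℕ, 1 ≤ n →
      (Real.log n - ((n : ℝ) - 1) / n) -
          ∑ y : Y, (F y ^ n - Fm y ^ n) * Real.log ((F y ^ n - Fm y ^ n) / p y) ≥
        (1 - Real.exp (-(n : ℝ) * ε)) * Real.log ((n : ℝ) * ε) - 1) ∧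
    Tendsto (fun n : ℕ =>
        (1 - Real.exp (-(n : ℝ) * ε)) * Real.log ((n : ℝ) * ε) - 1)
      atTop atTop := by
  classical
  have hε0 : 0 < ε := hε ▸ hp ymax
  have h1ε : 0 < 1 - ε := by linarith
  constructor
  · intro n hn
    have hN1 : (1:ℝ) ≤ (n:ℝ) := by exact_mod_cast hn
    have hN0 : (0:ℝ) < n := by linarith
    have hncast : ((n-1 : ℕ) : ℝ) = (n:ℝ) - 1 := by
      rw [Nat.cast_sub hn]; norm_num
    have hple : ∀ y, 0 ≤ p y := fun y => (hp y).le
    have hFmnn : ∀ y, 0 ≤ Fm y := by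
      intro y; rw [hFm]; exact Finset.sum_nonneg (fun z _ => hple z)
    have hsplit : ∀ y, F y = Fm y + p y := by
      intro y
      rw [hF, hFm]
      have hins : Finset.univ.filter (fun z => r z ≤ r y)
          = insert y (Finset.univ.filter (fun z => r z < r y)) := by
        ext z
        simp only [Finset.mem_filter, Finset.mem_insert, Finset.mem_univ, true_and]
        constructor
        · intro hzy
          rcases eq_or_lt_of_le hzy with hq | hq
          · exact Or.inl (hr hq)
          · exact Or.inr hq
        · rintro (rfl | hq)
          · exact le_refl _
          · exact hq.le
      rw [hins, Finset.sum_insert (by simp)]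
      ring
    have hFpos : ∀ y, 0 < F y := fun y => by
      rw [hsplit]; have := hp y; have := hFmnn y; linarith
    have hFmF : ∀ y, Fm y ≤ F y := fun y => by
      rw [hsplit]; linarith [hp y]
    have hF1 : ∀ y, F y ≤ 1 := by
      intro y; rw [hF, ← hsum]
      exact Finset.sum_le_sum_of_subset_of_nonneg (Finset.filter_subset _ _)
        (fun z _ _ => hple z)
    have hFymax : F ymax = 1 := by
      rw [hF, Finset.filter_true_of_mem (fun z _ => hymax z), hsum]
    have hFmymax : Fm ymax = 1 - ε := by
      rw [hFm, hε]
      have herase : Finset.univ.filter (fun z => r z < r ymax)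
          = Finset.univ.erase ymax := by
        ext z
        simp only [Finset.mem_filter, Finset.mem_erase, Finset.mem_univ, true_and, and_true]
        constructor
        · intro h hzy; subst hzy; exact lt_irrefl _ h
        · intro hz; exact lt_of_le_of_ne (hymax z) (fun hq => hz (hr hq))
      rw [herase, Finset.sum_erase_eq_sub (Finset.mem_univ ymax), hsum]
    have hFle : ∀ y, y ≠ ymax → F y ≤ 1 - ε := by
      intro y hy
      rw [hF]
      have hsub : Finset.univ.filter (fun z => r z ≤ r y) ⊆ Finset.univ.erase ymax := by
        intro z hz
        rw [Finset.mem_filter] at hz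
        rw [Finset.mem_erase]
        refine ⟨?_, Finset.mem_univ z⟩
        rintro rfl
        exact hy (hr (le_antisymm (hymax y) hz.2))
      calc ∑ z ∈ Finset.univ.filter (fun z => r z ≤ r y), p z
          ≤ ∑ z ∈ Finset.univ.erase ymax, p z :=
            Finset.sum_le_sum_of_subset_of_nonneg hsub (fun z _ _ => hple z)
        _ = 1 - ε := by
            rw [Finset.sum_erase_eq_sub (Finset.mem_univ ymax), hsum, hε]
    have hπpos : ∀ y, 0 < F y ^ n - Fm y ^ n := by
      intro y
      have hlt : Fm y < F y := by rw [hsplit]; linarith [hp y]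
      exact sub_pos.mpr (pow_lt_pow_left₀ hlt (hFmnn y) (by omega))
    have hπsum : ∑ y, (F y ^ n - Fm y ^ n) = 1 := by
      calc ∑ y, (F y ^ n - Fm y ^ n)
          = ∑ y, ((∑ z ∈ Finset.univ.filter (fun z => r z ≤ r y), p z) ^ n
            - (∑ z ∈ Finset.univ.filter (fun z => r z < r y), p z) ^ n) := by
            refine Finset.sum_congr rfl (fun y _ => ?_)
            rw [hF y, hFm y]
        _ = 1 := sum_pi_eq_one p r hr hsum hn
    have hπymax : F ymax ^ n - Fm ymax ^ n = 1 - (1-ε)^n := by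
      rw [hFymax, hFmymax, one_pow]
    set q : ℝ := (1-ε)^n with hqdef
    clear_value q
    have hq0 : 0 < q := hqdef ▸ pow_pos h1ε n
    have hq1 : q < 1 := by
      rw [hqdef]
      exact pow_lt_one₀ h1ε.le (by linarith) (by omega)
    set c : ℝ := Real.log n + ((n:ℝ)-1) * Real.log (1-ε) with hcdef
    clear_value c
    -- per-term bound
    have hterm : ∀ y ∈ Finset.univ.erase ymax,
        (F y ^ n - Fm y ^ n) * Real.log ((F y ^ n - Fm y ^ n) / p y)
          ≤ (F y ^ n - Fm y ^ n) * c := by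
      intro y hy
      have hy' : y ≠ ymax := (Finset.mem_erase.mp hy).1
      refine mul_le_mul_of_nonneg_left ?_ (hπpos y).le
      have h1 : F y ^ n - Fm y ^ n ≤ (n:ℝ) * p y * F y ^ (n-1) := by
        have haux := aux_pow_sub_pow (hFmnn y) (hFmF y) (n-1)
        rw [Nat.sub_add_cancel hn] at haux
        rw [hncast] at haux
        have hFmp : F y - Fm y = p y := by rw [hsplit]; ring
        calc F y ^ n - Fm y ^ n ≤ ((n:ℝ) - 1 + 1) * (F y - Fm y) * F y ^ (n-1) := haux
          _ = (n:ℝ) * p y * F y ^ (n-1) := by rw [hFmp]; ring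
      have h2 : F y ^ (n-1) ≤ (1-ε) ^ (n-1) :=
        pow_le_pow_left₀ (hFpos y).le (hFle y hy') _
      have h3 : (F y ^ n - Fm y ^ n) / p y ≤ (n:ℝ) * (1-ε) ^ (n-1) := by
        rw [div_le_iff₀ (hp y)]
        calc F y ^ n - Fm y ^ n ≤ (n:ℝ) * p y * F y ^ (n-1) := h1
          _ ≤ (n:ℝ) * p y * (1-ε) ^ (n-1) := by
              exact mul_le_mul_of_nonneg_left h2 (mul_nonneg hN0.le (hple y))
          _ = (n:ℝ) * (1-ε) ^ (n-1) * p y := by ring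
      calc Real.log ((F y ^ n - Fm y ^ n) / p y)
          ≤ Real.log ((n:ℝ) * (1-ε) ^ (n-1)) :=
            Real.log_le_log (div_pos (hπpos y) (hp y)) h3
        _ = Real.log n + ((n:ℝ)-1) * Real.log (1-ε) := by
            rw [Real.log_mul (by positivity) (by positivity), Real.log_pow, hncast]
        _ = c := by rw [hcdef]
    have hsumerase : ∑ y ∈ Finset.univ.erase ymax, (F y ^ n - Fm y ^ n) = q := by
      rw [Finset.sum_erase_eq_sub (Finset.mem_univ ymax), hπsum, hπymax]
      ring
    have hKLsplit : ∑ y : Y, (F y ^ n - Fm y ^ n) * Real.log ((F y ^ n - Fm y ^ n) / p y)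
        = ∑ y ∈ Finset.univ.erase ymax,
            (F y ^ n - Fm y ^ n) * Real.log ((F y ^ n - Fm y ^ n) / p y)
          + (F ymax ^ n - Fm ymax ^ n) * Real.log ((F ymax ^ n - Fm ymax ^ n) / p ymax) :=
      (Finset.sum_erase_add _ _ (Finset.mem_univ ymax)).symm
    have hKLle : ∑ y : Y, (F y ^ n - Fm y ^ n) * Real.log ((F y ^ n - Fm y ^ n) / p y)
        ≤ q * c + (1-q) * (Real.log (1-q) - Real.log ε) := by
      rw [hKLsplit]
      have hA : ∑ y ∈ Finset.univ.erase ymax,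
          (F y ^ n - Fm y ^ n) * Real.log ((F y ^ n - Fm y ^ n) / p y) ≤ q * c := by
        calc ∑ y ∈ Finset.univ.erase ymax,
            (F y ^ n - Fm y ^ n) * Real.log ((F y ^ n - Fm y ^ n) / p y)
            ≤ ∑ y ∈ Finset.univ.erase ymax, (F y ^ n - Fm y ^ n) * c :=
              Finset.sum_le_sum hterm
          _ = q * c := by rw [← Finset.sum_mul, hsumerase]
      have hB : (F ymax ^ n - Fm ymax ^ n) * Real.log ((F ymax ^ n - Fm ymax ^ n) / p ymax)
          = (1-q) * (Real.log (1-q) - Real.log ε) := by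
        rw [hπymax, ← hε, Real.log_div (by linarith) hε0.ne']
      linarith
    -- scalar endgame
    set E : ℝ := Real.exp (-(n:ℝ) * ε) with hEdef
    clear_value E
    have hE0 : 0 < E := hEdef ▸ Real.exp_pos _
    have hqE : q ≤ E := by
      have hexp : 1 - ε ≤ Real.exp (-ε) := by linarith [Real.add_one_le_exp (-ε)]
      calc q = (1-ε)^n := hqdef
        _ ≤ (Real.exp (-ε))^n := pow_le_pow_left₀ h1ε.le hexp n
        _ = E := by rw [hEdef, ← Real.exp_nat_mul]; congr 1; ring
    have hL : Real.log ((n:ℝ) * ε) = Real.log n + Real.log ε :=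
      Real.log_mul hN0.ne' hε0.ne'
    have hlogεneg : Real.log (1-ε) ≤ 0 := Real.log_nonpos (by linarith) (by linarith)
    have hlogqneg : Real.log (1-q) ≤ 0 := Real.log_nonpos (by linarith) (by linarith)
    have hkey : ((E - q) * (Real.log n + Real.log ε)) + 1/(n:ℝ) ≥ 0 := by
      rcases le_or_gt 0 (Real.log n + Real.log ε) with hLpos | hLneg
      · have : 0 ≤ (E - q) * (Real.log n + Real.log ε) :=
          mul_nonneg (by linarith) hLpos
        have : 0 < 1/(n:ℝ) := by positivity
        linarith
      · have hNε0 : 0 < (n:ℝ) * ε := by positivity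
        have hNε1 : (n:ℝ) * ε < 1 := by
          by_contra hcon
          push_neg at hcon
          have := Real.log_nonneg hcon
          rw [hL] at this
          linarith
        have hEq2 : E - q ≤ (n:ℝ) * ε^2 := by
          have haux := aux_pow_sub_pow (le_of_lt h1ε)
            (by linarith [Real.add_one_le_exp (-ε)] : 1 - ε ≤ Real.exp (-ε)) (n-1)
          rw [Nat.sub_add_cancel hn, hncast] at haux
          have hexple : Real.exp (-ε) ≤ 1 := Real.exp_le_one_iff.mpr (by linarith)
          have hpow1 : Real.exp (-ε) ^ (n-1) ≤ 1 :=
            pow_le_one₀ (Real.exp_pos _).le hexple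
          have hqq : Real.exp (-ε) - (1-ε) ≤ ε^2 := by
            have h := Real.abs_exp_sub_one_sub_id_le (x := -ε) (by rw [abs_neg, abs_of_pos hε0]; linarith)
            rw [abs_le] at h
            nlinarith [h.2]
          have hEpow : E = Real.exp (-ε) ^ n := by
            rw [hEdef, ← Real.exp_nat_mul]; congr 1; ring
          have hstep : Real.exp (-ε) ^ n - (1-ε) ^ n
              ≤ ((n:ℝ) - 1 + 1) * (Real.exp (-ε) - (1-ε)) * Real.exp (-ε) ^ (n-1) := haux
          have hnn : 0 ≤ Real.exp (-ε) - (1-ε) := by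
            linarith [Real.add_one_le_exp (-ε)]
          have : ((n:ℝ) - 1 + 1) * (Real.exp (-ε) - (1-ε)) * Real.exp (-ε) ^ (n-1)
              ≤ (n:ℝ) * ε^2 := by
            have h5 : ((n:ℝ) - 1 + 1) * (Real.exp (-ε) - (1-ε)) * Real.exp (-ε) ^ (n-1)
                ≤ ((n:ℝ) - 1 + 1) * (Real.exp (-ε) - (1-ε)) * 1 := by
              apply mul_le_mul_of_nonneg_left hpow1
              apply mul_nonneg (by linarith) hnn
            have h6 : ((n:ℝ) - 1 + 1) * (Real.exp (-ε) - (1-ε)) ≤ (n:ℝ) * ε^2 := by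
              calc ((n:ℝ) - 1 + 1) * (Real.exp (-ε) - (1-ε)) = (n:ℝ) * (Real.exp (-ε) - (1-ε)) := by ring
                _ ≤ (n:ℝ) * ε^2 := mul_le_mul_of_nonneg_left hqq (by linarith)
            linarith
          rw [hqdef]
          linarith [hstep, this, hEpow]
        have hlogbound : -(Real.log n + Real.log ε) ≤ 1/((n:ℝ)*ε) := by
          have h7 : Real.log (((n:ℝ)*ε)⁻¹) ≤ ((n:ℝ)*ε)⁻¹ - 1 :=
            Real.log_le_sub_one_of_pos (by positivity)
          rw [Real.log_inv, hL] at h7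
          have : (0:ℝ) < ((n:ℝ)*ε)⁻¹ := by positivity
          rw [one_div]
          linarith
        have hεN : ε ≤ 1/(n:ℝ) := by
          rw [le_div_iff₀ hN0]
          linarith
        have hprod : (E - q) * (-(Real.log n + Real.log ε)) ≤ ((n:ℝ)*ε^2) * (1/((n:ℝ)*ε)) := by
          apply mul_le_mul hEq2 hlogbound (by linarith) (by positivity)
        have hcalc : ((n:ℝ)*ε^2) * (1/((n:ℝ)*ε)) = ε := by
          field_simp
        rw [hcalc] at hprod
        nlinarith
    -- combine
    have h1N : 1 - ((n:ℝ)-1)/(n:ℝ) = 1/(n:ℝ) := by field_simp; ring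
    rw [ge_iff_le, hL]
    have hfinal : (1 - E) * (Real.log n + Real.log ε) - 1
        ≤ (Real.log n - ((n:ℝ)-1)/(n:ℝ)) - (q * c + (1-q) * (Real.log (1-q) - Real.log ε)) := by
      rw [hcdef]
      have hterm1 : 0 ≤ -(q * (((n:ℝ)-1) * Real.log (1-ε))) := by
        have : 0 ≤ q * (((n:ℝ)-1) * (-Real.log (1-ε))) := by
          apply mul_nonneg hq0.le
          apply mul_nonneg (by linarith) (by linarith)
        linarith [this]
      have hterm2 : 0 ≤ -((1-q) * Real.log (1-q)) := by
        have : 0 ≤ (1-q) * (-Real.log (1-q)) := mul_nonneg (by linarith) (by linarith)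
        linarith [this]
      linarith [hkey, hterm1, hterm2, h1N]
    linarith [hKLle, hfinal]
  · -- tendsto
    have h1 : Tendsto (fun n : ℕ => (n:ℝ) * ε) atTop atTop :=
      Tendsto.atTop_mul_const hε0 tendsto_natCast_atTop_atTop
    have h2 : Tendsto (fun n : ℕ => Real.log ((n:ℝ)*ε)) atTop atTop :=
      Real.tendsto_log_atTop.comp h1
    have h3 : Tendsto (fun n : ℕ => 1 - Real.exp (-(n:ℝ)*ε)) atTop (𝓝 1) := by
      have hb : Tendsto (fun n : ℕ => -(n:ℝ)*ε) atTop atBot := by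
        have h := tendsto_neg_atTop_atBot.comp h1
        refine h.congr fun k => ?_
        simp [Function.comp, neg_mul]
      have hexp : Tendsto (fun n : ℕ => Real.exp (-(n:ℝ)*ε)) atTop (𝓝 0) :=
        Real.tendsto_exp_atBot.comp hb
      simpa using tendsto_const_nhds.sub hexp
    have h4 : Tendsto (fun n : ℕ => (1 - Real.exp (-(n:ℝ)*ε)) * Real.log ((n:ℝ)*ε)) atTop atTop :=
      h3.pos_mul_atTop one_pos h2
    simpa [sub_eq_add_neg] using tendsto_atTop_add_const_right atTop (-1) h4
end

section
/- For the best-of-n policy π⁽ⁿ⁾ on a finite set with injective rewards, KL(π⁽ⁿ⁾ ‖ p) ≤ E_{y∼π⁽ⁿ⁾}[ log((1 − (1 − p(y))ⁿ)/p(y)) ]. -/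
open Finset Real

/-- Both sides are `q` times a geometric sum, and each term of the left one is dominated
by the corresponding term of the right one since `b + q ≤ 1` and `b ≤ 1 - q`. -/
lemma add_pow_sub_pow_le_one_sub_one_sub_pow {R : Type*} [CommRing R] [LinearOrder R]
    [IsStrictOrderedRing R] {b q : R} (hb : 0 ≤ b) (hq : 0 ≤ q) (h : b + q ≤ 1) (n : ℕ) :
    (b + q) ^ n - b ^ n ≤ 1 - (1 - q) ^ n := by
  have hlhs := geom_sum₂_mul (b + q) b n
  have hrhs := geom_sum₂_mul 1 (1 - q) n
  rw [add_sub_cancel_left] at hlhs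
  rw [sub_sub_cancel, one_pow] at hrhs
  rw [← hlhs, ← hrhs]
  gcongr with i
  exact le_sub_iff_add_le.2 h

lemma sum_filter_le_eq_add_sum_filter_lt {Y β M : Type*} [Fintype Y] [LinearOrder β]
    [AddCommMonoid M] {r : Y → β} (hr : Function.Injective r) (p : Y → M) (y : Y) :
    ∑ z ∈ univ.filter (fun z => r z ≤ r y), p z =
      p y + ∑ z ∈ univ.filter (fun z => r z < r y), p z := by
  classical
  have hinsert :
      univ.filter (fun z => r z ≤ r y) = insert y (univ.filter (fun z => r z < r y)) := by
    ext z
    simp only [mem_filter, mem_univ, true_and, mem_insert, le_iff_lt_or_eq, hr.eq_iff]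
    tauto
  rw [hinsert, sum_insert (by simp)]

lemma mul_log_div_le_mul_log_div {a b c : ℝ} (ha : 0 ≤ a) (hab : a ≤ b) (hc : 0 < c) :
    a * log (a / c) ≤ a * log (b / c) := by
  rcases ha.eq_or_lt with rfl | ha
  · simp
  · gcongr

theorem stmt_16_general
    {Y : Type*} [Fintype Y]
    (p : Y → ℝ) (r : Y → ℝ)
    (hp : ∀ y, 0 < p y) (hsum : ∑ y, p y = 1)
    (hr : Function.Injective r)
    (n : ℕ)
    (F Fm : Y → ℝ)
    (hF : ∀ y, F y = ∑ z ∈ Finset.univ.filter (fun z => r z ≤ r y), p z)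
    (hFm : ∀ y, Fm y = ∑ z ∈ Finset.univ.filter (fun z => r z < r y), p z) :
    ∑ y : Y, (F y ^ n - Fm y ^ n) * Real.log ((F y ^ n - Fm y ^ n) / p y) ≤
      ∑ y : Y, (F y ^ n - Fm y ^ n) * Real.log ((1 - (1 - p y) ^ n) / p y) := by
  refine sum_le_sum fun y _ => ?_
  have hFm_nonneg : 0 ≤ Fm y := hFm y ▸ sum_nonneg fun z _ => (hp z).le
  have hF_le_one : F y ≤ 1 :=
    hF y ▸ hsum ▸ sum_le_sum_of_subset_of_nonneg (filter_subset _ _) fun z _ _ => (hp z).le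
  have hF_eq : F y = Fm y + p y := by
    rw [hF, hFm, sum_filter_le_eq_add_sum_filter_lt hr, add_comm]
  rw [hF_eq] at hF_le_one ⊢
  refine mul_log_div_le_mul_log_div ?_ ?_ (hp y)
  · exact sub_nonneg.2 (pow_le_pow_left₀ hFm_nonneg (le_add_of_nonneg_right (hp y).le) n)
  · exact add_pow_sub_pow_le_one_sub_one_sub_pow hFm_nonneg (hp y).le hF_le_one n

theorem stmt_16
    {Y : Type*} [Fintype Y]
    (p : Y → ℝ) (r : Y → ℝ)
    (hp : ∀ y, 0 < p y) (hsum : ∑ y, p y = 1)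
    (hr : Function.Injective r)
    (n : ℕ) (hn : 1 ≤ n)
    (F Fm : Y → ℝ)
    (hF : ∀ y, F y = ∑ z ∈ Finset.univ.filter (fun z => r z ≤ r y), p z)
    (hFm : ∀ y, Fm y = ∑ z ∈ Finset.univ.filter (fun z => r z < r y), p z) :
    ∑ y : Y, (F y ^ n - Fm y ^ n) * Real.log ((F y ^ n - Fm y ^ n) / p y) ≤
      ∑ y : Y, (F y ^ n - Fm y ^ n) * Real.log ((1 - (1 - p y) ^ n) / p y) :=
  stmt_16_general p r hp hsum hr n F Fm hF hFm
end

section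
/- For the best-of-n policy π⁽ⁿ⁾ with ε∞ = p(y_max) the probability of the highest-reward outcome, KL(π⁽ⁿ⁾ ‖ p) ≤ (1−ε∞)ⁿ (log n + (n−1) log(1−ε∞) − (n−1)/n) + (1 − (1−ε∞)ⁿ) log((1 − (1−ε∞)ⁿ)/ε∞). -/
open Finset Real

noncomputable def Hfun (n : ℕ) (v : ℝ) : ℝ :=
  v ^ n * Real.log n + ((n : ℝ) - 1) * (v ^ n * Real.log v) - ((n : ℝ) - 1) / n * v ^ n

lemma Hfun_cont (n : ℕ) (hn : 1 ≤ n) : Continuous (Hfun n) := by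
  have h1 : Continuous (fun v : ℝ => v ^ n * Real.log v) := by
    have : (fun v : ℝ => v ^ n * Real.log v) = fun v : ℝ => v ^ (n - 1) * (v * Real.log v) := by
      funext v
      rw [← mul_assoc, ← pow_succ, Nat.sub_add_cancel hn]
    rw [this]
    exact (continuous_pow _).mul Real.continuous_mul_log
  unfold Hfun
  continuity

noncomputable def qfun (n : ℕ) (c x : ℝ) : ℝ := ∑ i ∈ Finset.range n, x ^ i * c ^ (n - 1 - i)

lemma qfun_pos (n : ℕ) (hn : 1 ≤ n) {c x : ℝ} (hc : 0 < c) (hx : 0 ≤ x) :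
    0 < qfun n c x := by
  unfold qfun
  apply Finset.sum_pos'
  · intro i _; positivity
  · exact ⟨0, Finset.mem_range.2 (by omega), by simpa using pow_pos hc _⟩

lemma qfun_eq (n : ℕ) {c x : ℝ} (hxc : x ≠ c) :
    qfun n c x = (c ^ n - x ^ n) / (c - x) := by
  have h := geom_sum₂_mul x c n
  have hcx : c - x ≠ 0 := sub_ne_zero.2 (Ne.symm hxc)
  field_simp [qfun]
  simp only [qfun]
  nlinarith [h]

noncomputable def ffun (n : ℕ) (c x : ℝ) : ℝ :=
  Hfun n c - Hfun n x - (c ^ n - x ^ n) * Real.log (qfun n c x)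

lemma ffun_deriv (n : ℕ) (hn : 1 ≤ n) {c x : ℝ} (hx : 0 < x) (hxc : x < c) :
    ∃ D, HasDerivAt (ffun n c) D x ∧ D ≤ 0 := by
  have hc : 0 < c := hx.trans hxc
  have hnR : (0:ℝ) < n := by exact_mod_cast hn
  have hP : 0 < c ^ n - x ^ n :=
    sub_pos.2 (pow_lt_pow_left₀ hxc hx.le (by omega))
  have hd : 0 < c - x := sub_pos.2 hxc
  set L := Real.log n with hL
  set A := (n : ℝ) - 1 with hA
  -- derivative pieces
  have h1 : HasDerivAt (fun y : ℝ => y ^ n) ((n:ℝ) * x ^ (n-1)) x := hasDerivAt_pow n x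
  have hlogx : HasDerivAt Real.log x⁻¹ x := Real.hasDerivAt_log hx.ne'
  have hxnlog : HasDerivAt (fun y : ℝ => y ^ n * Real.log y)
      ((n:ℝ) * x ^ (n-1) * Real.log x + x ^ n * x⁻¹) x := h1.mul hlogx
  have hH : HasDerivAt (Hfun n)
      ((n:ℝ) * x ^ (n-1) * L + A * ((n:ℝ) * x ^ (n-1) * Real.log x + x ^ n * x⁻¹)
        - A / n * ((n:ℝ) * x ^ (n-1))) x := by
    unfold Hfun
    exact ((h1.mul_const L).add (hxnlog.const_mul A)).sub (h1.const_mul (A / n))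
  have hP' : HasDerivAt (fun y : ℝ => c ^ n - y ^ n) (-((n:ℝ) * x ^ (n-1))) x :=
    h1.const_sub (c ^ n)
  have hdd : HasDerivAt (fun y : ℝ => c - y) (-1) x := (hasDerivAt_id x).const_sub c
  have hlogP : HasDerivAt (fun y : ℝ => Real.log (c ^ n - y ^ n))
      (-((n:ℝ) * x ^ (n-1)) / (c ^ n - x ^ n)) x := hP'.log hP.ne'
  have hlogd : HasDerivAt (fun y : ℝ => Real.log (c - y)) ((-1) / (c - x)) x := hdd.log hd.ne'
  have hT : HasDerivAt (fun y : ℝ => (c ^ n - y ^ n) * (Real.log (c ^ n - y ^ n) - Real.log (c - y)))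
      (-((n:ℝ) * x ^ (n-1)) * (Real.log (c ^ n - x ^ n) - Real.log (c - x))
        + (c ^ n - x ^ n) * (-((n:ℝ) * x ^ (n-1)) / (c ^ n - x ^ n) - (-1) / (c - x))) x :=
    hP'.mul (hlogP.sub hlogd)
  have hf2 := (hH.const_sub (Hfun n c)).sub hT
  refine ⟨_, hf2.congr_of_eventuallyEq ?_, ?_⟩
  · apply Filter.eventuallyEq_of_mem (Ioo_mem_nhds hx hxc)
    intro y hy
    have hy0 : 0 < y := hy.1
    have hyc : y < c := hy.2
    have hPy : 0 < c ^ n - y ^ n := sub_pos.2 (pow_lt_pow_left₀ hyc hy0.le (by omega))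
    have hdy : 0 < c - y := sub_pos.2 hyc
    simp only [ffun, qfun_eq n hyc.ne, Real.log_div hPy.ne' hdy.ne']
    rfl
  · -- show the derivative is nonpositive
    set g := (n:ℝ) * x ^ (n-1) with hgdef
    have hg : 0 < g := by positivity
    set P := c ^ n - x ^ n
    set d := c - x
    have hmg : 0 < P / d / g := by positivity
    have key := Real.log_le_sub_one_of_pos hmg
    have e_log : Real.log (P / d / g) = Real.log P - Real.log d - Real.log g := by
      rw [Real.log_div (by positivity) hg.ne', Real.log_div hP.ne' hd.ne']
    have e_logg : Real.log g = L + A * Real.log x := by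
      rw [hgdef, Real.log_mul hnR.ne' (by positivity), Real.log_pow]
      have : ((n - 1 : ℕ) : ℝ) = A := by rw [hA]; push_cast [Nat.cast_sub hn]; ring
      rw [this, hL]
    have mult : g * (Real.log P - Real.log d - (L + A * Real.log x)) ≤ P / d - g := by
      have h2 := mul_le_mul_of_nonneg_left key hg.le
      rw [e_log, e_logg] at h2
      calc g * (Real.log P - Real.log d - (L + A * Real.log x))
          ≤ g * (P / d / g - 1) := h2
        _ = P / d - g := by field_simp
    have e1 : x ^ n * x⁻¹ = x ^ (n - 1) := by
      rw [← pow_sub_one_mul (by omega : n ≠ 0) x]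
      field_simp
    have e2 : A / n * g = A * x ^ (n-1) := by rw [hgdef]; field_simp
    have e3 : P * (-g / P - (-1) / d) = -g + P / d := by
      field_simp
      ring
    rw [e1, e2, e3]
    nlinarith [mult]

lemma key_interval (n : ℕ) (hn : 1 ≤ n) {b c : ℝ} (hb : 0 ≤ b) (hbc : b ≤ c) :
    (c ^ n - b ^ n) * Real.log ((c ^ n - b ^ n) / (c - b)) ≤ Hfun n c - Hfun n b := by
  rcases eq_or_lt_of_le hbc with rfl | hlt
  · simp
  have hc : 0 < c := hb.trans_lt hlt
  have hcont : ContinuousOn (ffun n c) (Set.Icc 0 c) := by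
    unfold ffun
    apply ContinuousOn.sub
    · exact ContinuousOn.sub continuousOn_const ((Hfun_cont n hn).continuousOn)
    · apply ContinuousOn.mul (Continuous.continuousOn (by continuity))
      apply ContinuousOn.log (Continuous.continuousOn (by unfold qfun; continuity))
      intro x hx
      exact (qfun_pos n hn hc hx.1).ne'
  have hderiv : ∀ x ∈ Set.Ioo (0:ℝ) c, ∃ D, HasDerivAt (ffun n c) D x ∧ D ≤ 0 :=
    fun x hx => ffun_deriv n hn hx.1 hx.2
  have hanti : AntitoneOn (ffun n c) (Set.Icc 0 c) := by
    apply antitoneOn_of_deriv_nonpos (convex_Icc 0 c) hcont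
    · rw [interior_Icc]
      intro x hx
      obtain ⟨D, hD, _⟩ := hderiv x hx
      exact hD.differentiableAt.differentiableWithinAt
    · rw [interior_Icc]
      intro x hx
      obtain ⟨D, hD, hD0⟩ := hderiv x hx
      rw [hD.deriv]; exact hD0
  have h0 : ffun n c c = 0 := by simp [ffun]
  have hineq := hanti (Set.mem_Icc.2 ⟨hb, hbc⟩) (Set.mem_Icc.2 ⟨hc.le, le_refl c⟩) hbc
  rw [h0] at hineq
  unfold ffun at hineq
  rw [qfun_eq n hlt.ne] at hineq
  linarith

theorem stmt_17
    {Y : Type*} [Fintype Y]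
    (p : Y → ℝ) (r : Y → ℝ)
    (hp : ∀ y, 0 < p y) (hsum : ∑ y, p y = 1)
    (hr : Function.Injective r)
    (ymax : Y) (hymax : ∀ y, r y ≤ r ymax)
    (ε : ℝ) (hε : ε = p ymax)
    (n : ℕ) (hn : 1 ≤ n)
    (F Fm : Y → ℝ)
    (hF : ∀ y, F y = ∑ z ∈ Finset.univ.filter (fun z => r z ≤ r y), p z)
    (hFm : ∀ y, Fm y = ∑ z ∈ Finset.univ.filter (fun z => r z < r y), p z) :
    ∑ y : Y, (F y ^ n - Fm y ^ n) * Real.log ((F y ^ n - Fm y ^ n) / p y) ≤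
      (1 - ε) ^ n *
          (Real.log n + ((n : ℝ) - 1) * Real.log (1 - ε) - ((n : ℝ) - 1) / n) +
        (1 - (1 - ε) ^ n) * Real.log ((1 - (1 - ε) ^ n) / ε) := by
  letI : LinearOrder Y := LinearOrder.lift' r hr
  have hle : ∀ a b : Y, a ≤ b ↔ r a ≤ r b := fun _ _ => Iff.rfl
  have hlt : ∀ a b : Y, a < b ↔ r a < r b := fun a b => by
    rw [lt_iff_le_not_ge, lt_iff_le_not_ge, hle, hle]
  set k := Fintype.card Y with hk
  have hk0 : 0 < k := Fintype.card_pos_iff.2 ⟨ymax⟩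
  set e : Fin k ≃o Y := monoEquivOfFin Y rfl with he
  have htop : ∀ y : Y, y ≤ ymax := fun y => (hle y ymax).2 (hymax y)
  have hlast : e ⟨k - 1, by omega⟩ = ymax := by
    apply le_antisymm (htop _)
    rw [← e.apply_symm_apply ymax]
    apply e.monotone
    rw [Fin.le_def]
    simp only [Fin.val_mk]
    have := (e.symm ymax).isLt
    omega
  -- rewrite F and Fm via the order
  have hFle : ∀ y, F y = ∑ z ∈ Finset.univ.filter (· ≤ y), p z := by
    intro y
    rw [hF y]
    apply Finset.sum_congr _ (fun _ _ => rfl)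
    ext z
    simp [hle]
  have hFmlt : ∀ y, Fm y = ∑ z ∈ Finset.univ.filter (· < y), p z := by
    intro y
    rw [hFm y]
    apply Finset.sum_congr _ (fun _ _ => rfl)
    ext z
    simp [hlt]
  have hFFm : ∀ y, F y = Fm y + p y := by
    intro y
    have hins : Finset.univ.filter (· ≤ y) = insert y (Finset.univ.filter (· < y)) := by
      ext z
      simp [le_iff_lt_or_eq, or_comm]
    rw [hFle, hFmlt, hins, Finset.sum_insert (by simp)]
    ring
  have hFmnn : ∀ y, 0 ≤ Fm y := by
    intro y
    rw [hFmlt]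
    exact Finset.sum_nonneg fun z _ => (hp z).le
  have hstep : ∀ (m : ℕ) (h1 : m + 1 < k), F (e ⟨m, by omega⟩) = Fm (e ⟨m + 1, h1⟩) := by
    intro m h1
    rw [hFle, hFmlt]
    apply Finset.sum_congr _ (fun _ _ => rfl)
    ext z
    obtain ⟨j, rfl⟩ := e.surjective z
    simp only [Finset.mem_filter, Finset.mem_univ, true_and, e.le_iff_le, e.lt_iff_lt,
      Fin.le_def, Fin.lt_def, Fin.val_mk]
    omega
  have hFm0 : Fm (e ⟨0, hk0⟩) = 0 := by
    rw [hFmlt]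
    apply Finset.sum_eq_zero
    intro z hz
    exfalso
    obtain ⟨j, rfl⟩ := e.surjective z
    simp only [Finset.mem_filter, Finset.mem_univ, true_and, e.lt_iff_lt,
      Fin.lt_def, Fin.val_mk] at hz
    omega
  have hFymax : F ymax = 1 := by
    rw [hFle, Finset.filter_true_of_mem (fun z _ => htop z)]
    exact hsum
  have hFmymax : Fm ymax = 1 - ε := by
    have := hFFm ymax
    rw [hFymax] at this
    rw [hε]
    linarith
  have hεpos : 0 < ε := hε ▸ hp ymax
  have hann : 0 ≤ 1 - ε := by rw [← hFmymax]; exact hFmnn ymax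
  -- the summand as a function
  set term : Y → ℝ := fun y => (F y ^ n - Fm y ^ n) * Real.log ((F y ^ n - Fm y ^ n) / p y)
    with hterm
  set T : ℕ → ℝ := fun m => if h : m < k then term (e ⟨m, h⟩) else 0 with hT
  set G : ℕ → ℝ := fun m => if h : m < k then Fm (e ⟨m, h⟩) else 1 - ε with hG
  have hsum1 : ∑ y : Y, term y = ∑ m ∈ Finset.range k, T m := by
    rw [← Equiv.sum_comp e.toEquiv term, ← Fin.sum_univ_eq_sum_range]
    apply Finset.sum_congr rfl
    intro i _
    simp only [hT, i.isLt, dif_pos, Fin.eta]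
    rfl
  have hsplit : ∑ m ∈ Finset.range k, T m = ∑ m ∈ Finset.range (k - 1), T m + T (k - 1) := by
    have hk1 : k - 1 + 1 = k := by omega
    conv_lhs => rw [← hk1]
    rw [Finset.sum_range_succ]
  have hTlast : T (k - 1) = (1 - (1 - ε) ^ n) * Real.log ((1 - (1 - ε) ^ n) / ε) := by
    rw [hT]
    simp only [dif_pos (by omega : k - 1 < k)]
    rw [hterm]
    simp only [hlast, hFymax, hFmymax, hε, one_pow]
  have hbound : ∀ m ∈ Finset.range (k - 1), T m ≤ Hfun n (G (m + 1)) - Hfun n (G m) := by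
    intro m hm
    rw [Finset.mem_range] at hm
    have hmk : m < k := by omega
    have hm1k : m + 1 < k := by omega
    simp only [hT, hG, dif_pos hmk, dif_pos hm1k]
    have hb : Fm (e ⟨m, hmk⟩) ≤ Fm (e ⟨m + 1, hm1k⟩) := by
      rw [← hstep m hm1k, hFFm]
      have := hp (e ⟨m, hmk⟩)
      linarith
    have hpeq : p (e ⟨m, hmk⟩) = Fm (e ⟨m + 1, hm1k⟩) - Fm (e ⟨m, hmk⟩) := by
      rw [← hstep m hm1k, hFFm]
      ring
    calc term (e ⟨m, hmk⟩)
        = (Fm (e ⟨m + 1, hm1k⟩) ^ n - Fm (e ⟨m, hmk⟩) ^ n) *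
            Real.log ((Fm (e ⟨m + 1, hm1k⟩) ^ n - Fm (e ⟨m, hmk⟩) ^ n) /
              (Fm (e ⟨m + 1, hm1k⟩) - Fm (e ⟨m, hmk⟩))) := by
          rw [hterm]
          simp only [← hstep m hm1k, hpeq]
      _ ≤ Hfun n (Fm (e ⟨m + 1, hm1k⟩)) - Hfun n (Fm (e ⟨m, hmk⟩)) :=
          key_interval n hn (hFmnn _) hb
  have htel : ∑ m ∈ Finset.range (k - 1), (Hfun n (G (m + 1)) - Hfun n (G m))
      = Hfun n (1 - ε) := by
    rw [Finset.sum_range_sub (fun m => Hfun n (G m)) (k - 1)]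
    have hGlast : G (k - 1) = 1 - ε := by
      simp only [hG, dif_pos (by omega : k - 1 < k), hlast, hFmymax]
    have hG0 : G 0 = 0 := by simp only [hG, dif_pos hk0, hFm0]
    rw [hGlast, hG0]
    have : Hfun n 0 = 0 := by
      simp [Hfun, zero_pow (by omega : n ≠ 0)]
    rw [this, sub_zero]
  have hmain : ∑ m ∈ Finset.range (k - 1), T m ≤ Hfun n (1 - ε) := by
    calc ∑ m ∈ Finset.range (k - 1), T m
        ≤ ∑ m ∈ Finset.range (k - 1), (Hfun n (G (m + 1)) - Hfun n (G m)) :=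
          Finset.sum_le_sum hbound
      _ = Hfun n (1 - ε) := htel
  have hHfun : Hfun n (1 - ε) = (1 - ε) ^ n *
      (Real.log n + ((n : ℝ) - 1) * Real.log (1 - ε) - ((n : ℝ) - 1) / n) := by
    unfold Hfun
    ring
  calc ∑ y : Y, term y = ∑ m ∈ Finset.range (k - 1), T m + T (k - 1) := by
        rw [hsum1, hsplit]
    _ ≤ Hfun n (1 - ε) + (1 - (1 - ε) ^ n) * Real.log ((1 - (1 - ε) ^ n) / ε) := by
        rw [hTlast]
        exact add_le_add_left hmain _
    _ = _ := by rw [hHfun]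
end
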